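/- arXiv:1905.12761 — 9 statements merged into one kernel-verified Lean document; each statement's English description precedes it below -/
import Mathlib

section
/- Let C be a two-dimensional elasticity tensor and let H be the subgroup of O(2) generated by −I together with all reflections Ref(θ) that are symmetry transformations of C. Then there exists a rotation R ∈ SO(2) such that R H Rᵀ is equal, as a subset of O(2), to one of the four standard symmetry groups: the oblique group, the rectangular group, the square group, or the isotropic group. -/
open Matrix Real

/-- Counterclockwise rotation by angle `θ`. -/
noncomputable def Rot (θ : ℝ) : Matrix (Fin 2) (Fin 2) ℝ :=
  !![Real.cos θ, -Real.sin θ; Real.sin θ, Real.cos θ]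

/-- Reflection about the line through the origin making angle `θ` with the x-axis. -/
noncomputable def Ref (θ : ℝ) : Matrix (Fin 2) (Fin 2) ℝ :=
  !![Real.cos (2*θ), Real.sin (2*θ); Real.sin (2*θ), -Real.cos (2*θ)]

/-- A two-dimensional elasticity tensor: minor and major symmetries. -/
def IsElast2 (C : Fin 2 → Fin 2 → Fin 2 → Fin 2 → ℝ) : Prop :=
  (∀ i j k l, C i j k l = C j i k l) ∧
  (∀ i j k l, C i j k l = C i j l k) ∧
  (∀ i j k l, C i j k l = C k l i j)

/-- `Q` is a symmetry transformation of the tensor `C`. -/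
def IsSymTrans (C : Fin 2 → Fin 2 → Fin 2 → Fin 2 → ℝ)
    (Q : Matrix (Fin 2) (Fin 2) ℝ) : Prop :=
  ∀ i j k l, C i j k l =
    ∑ p, ∑ q, ∑ r, ∑ s, Q i p * Q j q * Q k r * Q l s * C p q r s

/-- The oblique symmetry group `{I, -I}`, as the subgroup of O(2) generated by `-I`. -/
noncomputable def obliqueGroup : Subgroup ↥(Matrix.orthogonalGroup (Fin 2) ℝ) :=
  Subgroup.closure {Q | (Q : Matrix (Fin 2) (Fin 2) ℝ) = -1}

/-- The rectangular symmetry group: generated by `-I` and `Ref 0`. -/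
noncomputable def rectGroup : Subgroup ↥(Matrix.orthogonalGroup (Fin 2) ℝ) :=
  Subgroup.closure
    {Q | (Q : Matrix (Fin 2) (Fin 2) ℝ) = -1 ∨ (Q : Matrix (Fin 2) (Fin 2) ℝ) = Ref 0}

/-- The square symmetry group: generated by `-I`, `Ref 0` and `Ref (π/4)`. -/
noncomputable def squareGroup : Subgroup ↥(Matrix.orthogonalGroup (Fin 2) ℝ) :=
  Subgroup.closure
    {Q | (Q : Matrix (Fin 2) (Fin 2) ℝ) = -1 ∨ (Q : Matrix (Fin 2) (Fin 2) ℝ) = Ref 0 ∨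
      (Q : Matrix (Fin 2) (Fin 2) ℝ) = Ref (π/4)}

/-- The isotropic symmetry group: all of O(2). -/
def isoGroup : Subgroup ↥(Matrix.orthogonalGroup (Fin 2) ℝ) := ⊤



section AuxLemmas

lemma rot_mul_rot (a b : ℝ) : Rot a * Rot b = Rot (a+b) := by
  ext i j
  fin_cases i <;> fin_cases j <;>
    simp [Rot, Matrix.mul_apply, Fin.sum_univ_two, Real.cos_add, Real.sin_add] <;> ring

lemma rot_zero : Rot 0 = 1 := by
  ext i j; fin_cases i <;> fin_cases j <;> simp [Rot]

lemma rot_transpose (a : ℝ) : (Rot a)ᵀ = Rot (-a) := by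
  ext i j; fin_cases i <;> fin_cases j <;> simp [Rot]

lemma ref_mul_ref (a b : ℝ) : Ref a * Ref b = Rot (2*(a-b)) := by
  ext i j
  fin_cases i <;> fin_cases j <;>
    simp [Rot, Ref, Matrix.mul_apply, Fin.sum_univ_two] <;>
    rw [show 2*(a-b) = 2*a - 2*b by ring] <;>
    simp [Real.cos_sub, Real.sin_sub] <;> ring

lemma rot_mul_ref (a b : ℝ) : Rot a * Ref b = Ref (b + a/2) := by
  ext i j
  fin_cases i <;> fin_cases j <;>
    simp [Rot, Ref, Matrix.mul_apply, Fin.sum_univ_two] <;>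
    rw [show 2*(b + a/2) = 2*b + a by ring] <;>
    simp [Real.cos_add, Real.sin_add] <;> ring

lemma ref_pi_div_two_add (b : ℝ) : Ref (b + π/2) = -Ref b := by
  ext i j
  fin_cases i <;> fin_cases j <;>
    simp [Ref] <;> rw [show 2*(b + π/2) = 2*b + π by ring] <;>
    simp [Real.cos_add, Real.sin_add]

lemma ref_add_int_pi (b : ℝ) (n : ℤ) : Ref (b + n * π) = Ref b := by
  ext i j
  fin_cases i <;> fin_cases j <;>
    simp [Ref] <;> rw [show 2*(b + n*π) = 2*b + n*(2*π) by ring] <;>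
    simp [Real.cos_add_int_mul_two_pi, Real.sin_add_int_mul_two_pi]



lemma ref_mul_rot (a b : ℝ) : Ref b * Rot a = Ref (b - a/2) := by
  ext i j
  fin_cases i <;> fin_cases j <;>
    simp [Rot, Ref, Matrix.mul_apply, Fin.sum_univ_two] <;>
    rw [show 2*(b - a/2) = 2*b - a by ring] <;>
    simp [Real.cos_sub, Real.sin_sub] <;> ring

lemma rot_mem : ∀ a, Rot a ∈ Matrix.orthogonalGroup (Fin 2) ℝ := by
  intro a
  rw [Matrix.mem_orthogonalGroup_iff]
  ext i j
  fin_cases i <;> fin_cases j <;>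
    simp [Rot, Matrix.mul_apply, Fin.sum_univ_two, Matrix.one_apply] <;>
    nlinarith [Real.sin_sq_add_cos_sq a]

lemma ref_mem : ∀ a, Ref a ∈ Matrix.orthogonalGroup (Fin 2) ℝ := by
  intro a
  rw [Matrix.mem_orthogonalGroup_iff]
  ext i j
  fin_cases i <;> fin_cases j <;>
    simp [Ref, Matrix.mul_apply, Fin.sum_univ_two, Matrix.one_apply] <;>
    nlinarith [Real.sin_sq_add_cos_sq (2*a)]

lemma exists_angle (x y : ℝ) (h : x^2 + y^2 = 1) : ∃ ψ : ℝ, Real.cos ψ = x ∧ Real.sin ψ = y := by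
  have hx1 : -1 ≤ x := by nlinarith
  have hx2 : x ≤ 1 := by nlinarith
  have hs : Real.sin (Real.arccos x) = Real.sqrt (1 - x^2) := Real.sin_arccos x
  have hy : Real.sqrt (1 - x^2) = |y| := by
    rw [show 1 - x^2 = y^2 by linarith, Real.sqrt_sq_eq_abs]
  rcases le_or_gt 0 y with hy0 | hy0
  · exact ⟨Real.arccos x, Real.cos_arccos hx1 hx2, by rw [hs, hy, abs_of_nonneg hy0]⟩
  · refine ⟨-Real.arccos x, ?_, ?_⟩
    · rw [Real.cos_neg]; exact Real.cos_arccos hx1 hx2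
    · rw [Real.sin_neg, hs, hy, abs_of_neg hy0]; ring

lemma orth_classify (A : Matrix (Fin 2) (Fin 2) ℝ) (hA : A ∈ Matrix.orthogonalGroup (Fin 2) ℝ) :
    (∃ ψ, A = Rot ψ) ∨ (∃ ψ, A = Ref ψ) := by
  have h2 : Aᵀ * A = 1 := by
    have := Matrix.mem_orthogonalGroup_iff' (Fin 2) ℝ |>.mp hA
    simpa using this
  have e1 : A 0 0 ^2 + A 1 0 ^2 = 1 := by
    have := congrFun (congrFun h2 0) 0
    simp [Matrix.mul_apply, Fin.sum_univ_two, Matrix.one_apply] at this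
    nlinarith [this]
  have e2 : A 0 0 * A 0 1 + A 1 0 * A 1 1 = 0 := by
    have := congrFun (congrFun h2 0) 1
    simp [Matrix.mul_apply, Fin.sum_univ_two, Matrix.one_apply] at this
    nlinarith [this]
  have e3 : A 0 1 ^2 + A 1 1 ^2 = 1 := by
    have := congrFun (congrFun h2 1) 1
    simp [Matrix.mul_apply, Fin.sum_univ_two, Matrix.one_apply] at this
    nlinarith [this]
  obtain ⟨ψ, hcos, hsin⟩ := exists_angle (A 0 0) (A 1 0) e1
  have hb : A 0 1 = -(A 0 1 * (-(A 1 0)) + A 1 1 * A 0 0) * A 1 0 := by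
    linear_combination A 0 0 * e2 - A 0 1 * e1
  have hd : A 1 1 = (A 0 1 * (-(A 1 0)) + A 1 1 * A 0 0) * A 0 0 := by
    linear_combination A 1 0 * e2 - A 1 1 * e1
  have ht2 : ((A 0 1 * (-(A 1 0)) + A 1 1 * A 0 0) - 1) *
      ((A 0 1 * (-(A 1 0)) + A 1 1 * A 0 0) + 1) = 0 := by
    linear_combination (A 0 1 ^2 + A 1 1 ^2) * e1 + e3 -
      (A 0 0 * A 0 1 + A 1 0 * A 1 1) * e2
  rcases mul_eq_zero.mp ht2 with h | h
  · left
    have ht1 : A 0 1 * (-(A 1 0)) + A 1 1 * A 0 0 = 1 := by linarith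
    refine ⟨ψ, ?_⟩
    ext i j; fin_cases i <;> fin_cases j <;> simp [Rot, hcos, hsin]
    · linear_combination hb - A 1 0 * ht1
    · linear_combination hd + A 0 0 * ht1
  · right
    have ht1 : A 0 1 * (-(A 1 0)) + A 1 1 * A 0 0 = -1 := by linarith
    refine ⟨ψ/2, ?_⟩
    ext i j; fin_cases i <;> fin_cases j <;>
      simp [Ref, show 2*(ψ/2) = ψ by ring, hcos, hsin]
    · linear_combination hb - A 1 0 * ht1
    · linear_combination hd + A 0 0 * ht1

/-- Solutions of `y cos t = x sin t` for `(x,y) ≠ 0`. -/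
lemma solve_lin (x y : ℝ) (hxy : ¬(x = 0 ∧ y = 0)) :
    ∃ α : ℝ, ∀ t : ℝ, (y * Real.cos t = x * Real.sin t ↔ ∃ n : ℤ, t = α + n * π) := by
  have hr2 : x^2 + y^2 > 0 := by
    rcases not_and_or.mp hxy with h | h <;> [skip; skip] <;> positivity
  set r : ℝ := Real.sqrt (x^2 + y^2) with hrdef
  have hr : 0 < r := Real.sqrt_pos.mpr hr2
  have hr' : r^2 = x^2 + y^2 := Real.sq_sqrt (le_of_lt hr2)
  obtain ⟨ψ, hc, hs⟩ := exists_angle (x/r) (y/r) (by field_simp; linarith)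
  refine ⟨ψ, fun t => ?_⟩
  have key : y * Real.cos t - x * Real.sin t = r * Real.sin (ψ - t) := by
    rw [Real.sin_sub, hc, hs]; field_simp
  constructor
  · intro h
    have : Real.sin (ψ - t) = 0 := by
      have h0 : r * Real.sin (ψ - t) = 0 := by rw [← key]; linarith
      exact (mul_eq_zero.mp h0).resolve_left (ne_of_gt hr)
    obtain ⟨n, hn⟩ := Real.sin_eq_zero_iff.mp this
    exact ⟨-n, by push_cast; linarith⟩
  · rintro ⟨n, rfl⟩
    have : Real.sin (ψ - (ψ + n * π)) = 0 := by
      rw [show ψ - (ψ + n*π) = -n * π by ring]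
      exact Real.sin_eq_zero_iff.mpr ⟨-n, by push_cast; ring⟩
    nlinarith [key, this]

section Aux2
variable {C : Fin 2 → Fin 2 → Fin 2 → Fin 2 → ℝ}

lemma symTrans_ref_iff (hC : IsElast2 C) (θ : ℝ) :
    IsSymTrans C (Ref θ) ↔
      (2*(C 0 0 0 1 + C 0 1 1 1) * Real.cos (2*θ) =
        (C 0 0 0 0 - C 1 1 1 1) * Real.sin (2*θ)) ∧
      (4*(C 0 0 0 1 - C 0 1 1 1) * (Real.cos (2*θ)^2 - Real.sin (2*θ)^2) =
        2*(C 0 0 0 0 + C 1 1 1 1 - 2*C 0 0 1 1 - 4*C 0 1 0 1) *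
          (Real.cos (2*θ) * Real.sin (2*θ))) := by
  obtain ⟨hmin1, hmin2, hmaj⟩ := hC
  have hij : ∀ k l, C 1 0 k l = C 0 1 k l := fun k l => hmin1 1 0 k l
  have hkl : ∀ i j, C i j 1 0 = C i j 0 1 := fun i j => hmin2 i j 1 0
  have hm1 : C 0 1 0 0 = C 0 0 0 1 := hmaj 0 1 0 0
  have hm2 : C 1 1 0 0 = C 0 0 1 1 := hmaj 1 1 0 0
  have hm3 : C 1 1 0 1 = C 0 1 1 1 := hmaj 1 1 0 1
  have hp : Real.cos (2*θ)^2 + Real.sin (2*θ)^2 = 1 := Real.cos_sq_add_sin_sq (2*θ)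
  set u := Real.cos (2*θ) with hu
  set v := Real.sin (2*θ) with hv
  constructor
  · intro hsym
    have hd0000 := hsym 0 0 0 0
    have hd0001 := hsym 0 0 0 1
    have hd0011 := hsym 0 0 1 1
    have hd0111 := hsym 0 1 1 1
    simp only [IsSymTrans, Ref, Fin.sum_univ_two, Fin.isValue, Matrix.of_apply, Matrix.cons_val',
      Matrix.cons_val_zero, Matrix.cons_val_one, Matrix.head_cons, Matrix.empty_val',
      Matrix.cons_val_fin_one, Matrix.head_fin_const, ← hu, ← hv,
      hij, hkl, hm1, hm2, hm3] at hd0000 hd0001 hd0011 hd0111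
    constructor

    · linear_combination (-1 : ℝ) * v * hd0000 + (1 : ℝ) * u * hd0001 + (-1 : ℝ) * v * hd0011 + (1 : ℝ) * u * hd0111 + (-1 : ℝ) * (C 0 1 1 1) * u * hp + (-1 : ℝ) * (C 0 1 1 1) * u * v^2 * hp + (-1 : ℝ) * (C 0 1 1 1) * u^3 * hp + (-1 : ℝ) * (C 0 0 0 1) * u * hp + (-1 : ℝ) * (C 0 0 0 1) * u * v^2 * hp + (-1 : ℝ) * (C 0 0 0 1) * u^3 * hp + (-1 : ℝ) * (C 0 0 1 1) * v * hp + (-1 : ℝ) * (C 0 0 1 1) * v^3 * hp + (-1 : ℝ) * (C 0 0 1 1) * u^2 * v * hp + (-1 : ℝ) * (C 1 1 1 1) * v * hp + (-1 : ℝ) * (C 1 1 1 1) * v^3 * hp + (-1 : ℝ) * (C 1 1 1 1) * u^2 * v * hp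
    · linear_combination (-4 : ℝ) * u * v * hd0000 + (-6 : ℝ) * hd0001 + (8 : ℝ) * u^2 * hd0001 + (4 : ℝ) * u * v * hd0011 + (-2 : ℝ) * hd0111 + (-2 : ℝ) * (C 0 1 1 1) * hp + (-6 : ℝ) * (C 0 1 1 1) * v^2 * hp + (2 : ℝ) * (C 0 1 1 1) * u^2 * hp + (-16 : ℝ) * (C 0 1 1 1) * u^2 * v^2 * hp + (-6 : ℝ) * (C 0 0 0 1) * hp + (-2 : ℝ) * (C 0 0 0 1) * v^2 * hp + (-2 : ℝ) * (C 0 0 0 1) * u^2 * hp + (8 : ℝ) * (C 0 0 0 1) * u^2 * v^2 * hp + (-8 : ℝ) * (C 0 0 0 1) * u^4 * hp + (-8 : ℝ) * (C 0 1 0 1) * u * v * hp + (-16 : ℝ) * (C 0 1 0 1) * u^3 * v * hp + (4 : ℝ) * (C 0 0 1 1) * u * v^3 * hp + (-4 : ℝ) * (C 0 0 1 1) * u^3 * v * hp + (2 : ℝ) * (C 1 1 1 1) * u * v * hp + (-4 : ℝ) * (C 1 1 1 1) * u * v^3 * hp + (-2 : ℝ) * (C 0 0 0 0) * u * v * hp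 + (4 : ℝ) * (C 0 0 0 0) * u^3 * v * hp
  · rintro ⟨hE2, hE4⟩
    intro i j k l
    fin_cases i <;> fin_cases j <;> fin_cases k <;> fin_cases l <;>
      simp only [IsSymTrans, Ref, Fin.sum_univ_two, Fin.isValue, Matrix.of_apply, Matrix.cons_val',
      Matrix.cons_val_zero, Matrix.cons_val_one, Matrix.head_cons, Matrix.empty_val',
      Matrix.cons_val_fin_one, Matrix.head_fin_const, ← hu, ← hv,
        hij, hkl, hm1, hm2, hm3, Fin.mk_one, Fin.mk_zero]

    · linear_combination (-1 : ℝ) * v * hE2 + (-1/2 : ℝ) * u * v * hE4 + (-2 : ℝ) * (C 0 1 1 1) * u * v * hp + (-2 : ℝ) * (C 0 0 0 1) * u * v * hp + (-1 : ℝ) * (C 1 1 1 1) * v^2 * hp + (-1 : ℝ) * (C 0 0 0 0) * hp + (-1 : ℝ) * (C 0 0 0 0) * u^2 * hp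
    · linear_combination (1/2 : ℝ) * u * hE2 + (-1/4 : ℝ) * hE4 + (1/2 : ℝ) * u^2 * hE4 + (-1 : ℝ) * (C 0 1 1 1) * v^2 * hp + (2 : ℝ) * (C 0 1 1 1) * u^2 * hp + (-1 : ℝ) * (C 0 0 0 1) * hp + (-1 : ℝ) * (C 0 0 0 1) * u^2 * hp + (-2 : ℝ) * (C 0 1 0 1) * u * v * hp + (-1 : ℝ) * (C 0 0 1 1) * u * v * hp + (1 : ℝ) * (C 1 1 1 1) * u * v * hp
    · linear_combination (1/2 : ℝ) * u * hE2 + (-1/4 : ℝ) * hE4 + (1/2 : ℝ) * u^2 * hE4 + (-1 : ℝ) * (C 0 1 1 1) * v^2 * hp + (2 : ℝ) * (C 0 1 1 1) * u^2 * hp + (-1 : ℝ) * (C 0 0 0 1) * hp + (-1 : ℝ) * (C 0 0 0 1) * u^2 * hp + (-2 : ℝ) * (C 0 1 0 1) * u * v * hp + (-1 : ℝ) * (C 0 0 1 1) * u * v * hp + (1 : ℝ) * (C 1 1 1 1) * u * v * hp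
    · linear_combination (1/2 : ℝ) * u * v * hE4 + (-1 : ℝ) * (C 0 0 1 1) * hp + (-1 : ℝ) * (C 0 0 1 1) * v^2 * hp + (-1 : ℝ) * (C 0 0 1 1) * u^2 * hp
    · linear_combination (1/2 : ℝ) * u * hE2 + (-1/4 : ℝ) * hE4 + (1/2 : ℝ) * u^2 * hE4 + (-1 : ℝ) * (C 0 1 1 1) * v^2 * hp + (2 : ℝ) * (C 0 1 1 1) * u^2 * hp + (-1 : ℝ) * (C 0 0 0 1) * hp + (-1 : ℝ) * (C 0 0 0 1) * u^2 * hp + (-2 : ℝ) * (C 0 1 0 1) * u * v * hp + (-1 : ℝ) * (C 0 0 1 1) * u * v * hp + (1 : ℝ) * (C 1 1 1 1) * u * v * hp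
    · linear_combination (1/2 : ℝ) * u * v * hE4 + (-1 : ℝ) * (C 0 1 0 1) * hp + (-1 : ℝ) * (C 0 1 0 1) * v^2 * hp + (-1 : ℝ) * (C 0 1 0 1) * u^2 * hp
    · linear_combination (1/2 : ℝ) * u * v * hE4 + (-1 : ℝ) * (C 0 1 0 1) * hp + (-1 : ℝ) * (C 0 1 0 1) * v^2 * hp + (-1 : ℝ) * (C 0 1 0 1) * u^2 * hp
    · linear_combination (1/2 : ℝ) * u * hE2 + (1/4 : ℝ) * hE4 + (-1/2 : ℝ) * u^2 * hE4 + (-1 : ℝ) * (C 0 1 1 1) * hp + (-1 : ℝ) * (C 0 1 1 1) * u^2 * hp + (-1 : ℝ) * (C 0 0 0 1) * v^2 * hp + (2 : ℝ) * (C 0 0 0 1) * u^2 * hp + (2 : ℝ) * (C 0 1 0 1) * u * v * hp + (1 : ℝ) * (C 0 0 1 1) * u * v * hp + (-1 : ℝ) * (C 0 0 0 0) * u * v * hp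
    · linear_combination (1/2 : ℝ) * u * hE2 + (-1/4 : ℝ) * hE4 + (1/2 : ℝ) * u^2 * hE4 + (-1 : ℝ) * (C 0 1 1 1) * v^2 * hp + (2 : ℝ) * (C 0 1 1 1) * u^2 * hp + (-1 : ℝ) * (C 0 0 0 1) * hp + (-1 : ℝ) * (C 0 0 0 1) * u^2 * hp + (-2 : ℝ) * (C 0 1 0 1) * u * v * hp + (-1 : ℝ) * (C 0 0 1 1) * u * v * hp + (1 : ℝ) * (C 1 1 1 1) * u * v * hp
    · linear_combination (1/2 : ℝ) * u * v * hE4 + (-1 : ℝ) * (C 0 1 0 1) * hp + (-1 : ℝ) * (C 0 1 0 1) * v^2 * hp + (-1 : ℝ) * (C 0 1 0 1) * u^2 * hp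
    · linear_combination (1/2 : ℝ) * u * v * hE4 + (-1 : ℝ) * (C 0 1 0 1) * hp + (-1 : ℝ) * (C 0 1 0 1) * v^2 * hp + (-1 : ℝ) * (C 0 1 0 1) * u^2 * hp
    · linear_combination (1/2 : ℝ) * u * hE2 + (1/4 : ℝ) * hE4 + (-1/2 : ℝ) * u^2 * hE4 + (-1 : ℝ) * (C 0 1 1 1) * hp + (-1 : ℝ) * (C 0 1 1 1) * u^2 * hp + (-1 : ℝ) * (C 0 0 0 1) * v^2 * hp + (2 : ℝ) * (C 0 0 0 1) * u^2 * hp + (2 : ℝ) * (C 0 1 0 1) * u * v * hp + (1 : ℝ) * (C 0 0 1 1) * u * v * hp + (-1 : ℝ) * (C 0 0 0 0) * u * v * hp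
    · linear_combination (1/2 : ℝ) * u * v * hE4 + (-1 : ℝ) * (C 0 0 1 1) * hp + (-1 : ℝ) * (C 0 0 1 1) * v^2 * hp + (-1 : ℝ) * (C 0 0 1 1) * u^2 * hp
    · linear_combination (1/2 : ℝ) * u * hE2 + (1/4 : ℝ) * hE4 + (-1/2 : ℝ) * u^2 * hE4 + (-1 : ℝ) * (C 0 1 1 1) * hp + (-1 : ℝ) * (C 0 1 1 1) * u^2 * hp + (-1 : ℝ) * (C 0 0 0 1) * v^2 * hp + (2 : ℝ) * (C 0 0 0 1) * u^2 * hp + (2 : ℝ) * (C 0 1 0 1) * u * v * hp + (1 : ℝ) * (C 0 0 1 1) * u * v * hp + (-1 : ℝ) * (C 0 0 0 0) * u * v * hp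
    · linear_combination (1/2 : ℝ) * u * hE2 + (1/4 : ℝ) * hE4 + (-1/2 : ℝ) * u^2 * hE4 + (-1 : ℝ) * (C 0 1 1 1) * hp + (-1 : ℝ) * (C 0 1 1 1) * u^2 * hp + (-1 : ℝ) * (C 0 0 0 1) * v^2 * hp + (2 : ℝ) * (C 0 0 0 1) * u^2 * hp + (2 : ℝ) * (C 0 1 0 1) * u * v * hp + (1 : ℝ) * (C 0 0 1 1) * u * v * hp + (-1 : ℝ) * (C 0 0 0 0) * u * v * hp
    · linear_combination (1 : ℝ) * v * hE2 + (-1/2 : ℝ) * u * v * hE4 + (2 : ℝ) * (C 0 1 1 1) * u * v * hp + (2 : ℝ) * (C 0 0 0 1) * u * v * hp + (-1 : ℝ) * (C 1 1 1 1) * hp + (-1 : ℝ) * (C 1 1 1 1) * u^2 * hp + (-1 : ℝ) * (C 0 0 0 0) * v^2 * hp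


end Aux2

lemma case_analysis (C : Fin 2 → Fin 2 → Fin 2 → Fin 2 → ℝ) (hC : IsElast2 C) :
    (∀ θ, IsSymTrans C (Ref θ)) ∨
    (∀ θ, ¬ IsSymTrans C (Ref θ)) ∨
    (∃ β, ∀ θ, (IsSymTrans C (Ref θ) ↔ ∃ n : ℤ, θ = β + n * (π/2))) ∨
    (∃ β, ∀ θ, (IsSymTrans C (Ref θ) ↔ ∃ n : ℤ, θ = β + n * (π/4))) := by
  classical
  set x2 : ℝ := C 0 0 0 0 - C 1 1 1 1 with hx2
  set y2 : ℝ := 2*(C 0 0 0 1 + C 0 1 1 1) with hy2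
  set x4 : ℝ := C 0 0 0 0 + C 1 1 1 1 - 2*C 0 0 1 1 - 4*C 0 1 0 1 with hx4
  set y4 : ℝ := 4*(C 0 0 0 1 - C 0 1 1 1) with hy4
  have hiff : ∀ θ, IsSymTrans C (Ref θ) ↔
      ((y2 * Real.cos (2*θ) = x2 * Real.sin (2*θ)) ∧
       (y4 * Real.cos (4*θ) = x4 * Real.sin (4*θ))) := by
    intro θ
    rw [symTrans_ref_iff hC θ]
    have h4c : Real.cos (4*θ) = Real.cos (2*θ)^2 - Real.sin (2*θ)^2 := by
      have h := Real.cos_two_mul (2*θ)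
      have hpy := Real.sin_sq_add_cos_sq (2*θ)
      rw [show (4:ℝ)*θ = 2*(2*θ) by ring]
      linarith
    have h4s : Real.sin (4*θ) = 2 * Real.sin (2*θ) * Real.cos (2*θ) := by
      rw [show (4:ℝ)*θ = 2*(2*θ) by ring]
      exact Real.sin_two_mul (2*θ)
    rw [h4c, h4s]
    constructor <;> rintro ⟨h1, h2⟩ <;>
      exact ⟨by linear_combination h1, by linear_combination h2⟩
  by_cases h2 : x2 = 0 ∧ y2 = 0 <;> by_cases h4 : x4 = 0 ∧ y4 = 0
  · left
    intro θ
    rw [hiff θ, h2.1, h2.2, h4.1, h4.2]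
    constructor <;> ring
  · right; right; right
    obtain ⟨α, hα⟩ := solve_lin x4 y4 h4
    refine ⟨α/4, fun θ => ?_⟩
    rw [hiff θ]
    constructor
    · rintro ⟨-, hb⟩
      obtain ⟨n, hn⟩ := (hα (4*θ)).mp hb
      exact ⟨n, by linarith⟩
    · rintro ⟨n, rfl⟩
      refine ⟨by rw [h2.1, h2.2]; ring, (hα _).mpr ⟨n, by ring⟩⟩
  · right; right; left
    obtain ⟨α, hα⟩ := solve_lin x2 y2 h2
    refine ⟨α/2, fun θ => ?_⟩
    rw [hiff θ]
    constructor
    · rintro ⟨ha, -⟩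
      obtain ⟨n, hn⟩ := (hα (2*θ)).mp ha
      exact ⟨n, by linarith⟩
    · rintro ⟨n, rfl⟩
      refine ⟨(hα _).mpr ⟨n, by ring⟩, by rw [h4.1, h4.2]; ring⟩
  · obtain ⟨α2, hα2⟩ := solve_lin x2 y2 h2
    obtain ⟨α4, hα4⟩ := solve_lin x4 y4 h4
    by_cases hex : ∃ θ0, IsSymTrans C (Ref θ0)
    · obtain ⟨θ0, hθ0⟩ := hex
      obtain ⟨ha0, hb0⟩ := (hiff θ0).mp hθ0
      obtain ⟨n0, hn0⟩ := (hα2 (2*θ0)).mp ha0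
      obtain ⟨m0, hm0⟩ := (hα4 (4*θ0)).mp hb0
      right; right; left
      refine ⟨θ0, fun θ => ?_⟩
      rw [hiff θ]
      constructor
      · rintro ⟨ha, -⟩
        obtain ⟨n, hn⟩ := (hα2 (2*θ)).mp ha
        refine ⟨n - n0, by push_cast; linarith⟩
      · rintro ⟨k, rfl⟩
        constructor
        · exact (hα2 _).mpr ⟨n0 + k, by push_cast; linarith⟩
        · exact (hα4 _).mpr ⟨m0 + 2*k, by push_cast; linarith⟩
    · right; left
      intro θ h
      exact hex ⟨θ, h⟩

noncomputable def rotE (θ : ℝ) : ↥(Matrix.orthogonalGroup (Fin 2) ℝ) := ⟨Rot θ, rot_mem θ⟩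
noncomputable def refE (θ : ℝ) : ↥(Matrix.orthogonalGroup (Fin 2) ℝ) := ⟨Ref θ, ref_mem θ⟩

lemma neg_one_mem : (-1 : Matrix (Fin 2) (Fin 2) ℝ) ∈ Matrix.orthogonalGroup (Fin 2) ℝ := by
  rw [Matrix.mem_orthogonalGroup_iff]; simp

noncomputable def negE : ↥(Matrix.orthogonalGroup (Fin 2) ℝ) := ⟨-1, neg_one_mem⟩

lemma rotE_inv (θ : ℝ) : (rotE θ)⁻¹ = rotE (-θ) := by
  apply inv_eq_of_mul_eq_one_right
  apply Subtype.ext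
  push_cast [rotE]
  rw [rot_mul_rot]; simp [rot_zero]

lemma conj_val (φ : ℝ) (x : ↥(Matrix.orthogonalGroup (Fin 2) ℝ)) :
    ((MulAut.conj (rotE φ)) x : Matrix (Fin 2) (Fin 2) ℝ)
      = Rot φ * (x : Matrix (Fin 2) (Fin 2) ℝ) * (Rot φ)ᵀ := by
  rw [rot_transpose, MulAut.conj_apply, rotE_inv]
  push_cast [rotE]
  ring

lemma conj_neg (φ : ℝ) : (MulAut.conj (rotE φ)) negE = negE := by
  apply Subtype.ext
  rw [conj_val]
  show Rot φ * (-1) * (Rot φ)ᵀ = -1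
  rw [rot_transpose, mul_neg_one, neg_mul, rot_mul_rot]
  simp [rot_zero]

lemma conj_ref (φ θ : ℝ) : (MulAut.conj (rotE φ)) (refE θ) = refE (θ + φ) := by
  apply Subtype.ext
  rw [conj_val]
  show Rot φ * Ref θ * (Rot φ)ᵀ = Ref (θ + φ)
  rw [rot_transpose, rot_mul_ref, ref_mul_rot]
  ring_nf

lemma conj_image (φ : ℝ) (H : Subgroup ↥(Matrix.orthogonalGroup (Fin 2) ℝ)) :
    (fun M => Rot φ * M * (Rot φ)ᵀ) ''
        (Subtype.val '' (H : Set ↥(Matrix.orthogonalGroup (Fin 2) ℝ)))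
      = Subtype.val '' ((Subgroup.map (MulAut.conj (rotE φ)).toMonoidHom H :
          Subgroup ↥(Matrix.orthogonalGroup (Fin 2) ℝ)) :
            Set ↥(Matrix.orthogonalGroup (Fin 2) ℝ)) := by
  rw [Subgroup.coe_map, Set.image_image, Set.image_image]
  apply Set.image_congr
  intro x _
  exact (conj_val φ x).symm

lemma refE_pi2 (θ : ℝ) : refE (θ + π/2) = negE * refE θ := by
  apply Subtype.ext
  show Ref (θ + π/2) = (-1) * Ref θ
  rw [ref_pi_div_two_add, neg_one_mul]

lemma refE_int_pi (θ : ℝ) (n : ℤ) : refE (θ + n * π) = refE θ :=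
  Subtype.ext (ref_add_int_pi θ n)

lemma negE_mem_rect : negE ∈ rectGroup := Subgroup.subset_closure (Or.inl rfl)
lemma ref0_mem_rect : refE 0 ∈ rectGroup := Subgroup.subset_closure (Or.inr rfl)
lemma negE_mem_square : negE ∈ squareGroup := Subgroup.subset_closure (Or.inl rfl)
lemma ref0_mem_square : refE 0 ∈ squareGroup := Subgroup.subset_closure (Or.inr (Or.inl rfl))
lemma refpi4_mem_square : refE (π/4) ∈ squareGroup :=
  Subgroup.subset_closure (Or.inr (Or.inr rfl))

lemma refE_halfpi_mem_rect (n : ℤ) : refE (n * (π/2)) ∈ rectGroup := by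
  rcases Int.even_or_odd n with ⟨m, rfl⟩ | ⟨m, rfl⟩
  · have h : ((m + m : ℤ) : ℝ) * (π/2) = 0 + (m : ℝ) * π := by push_cast; ring
    rw [h, show ((m:ℝ)*π) = ((m:ℤ):ℝ)*π by push_cast; ring, refE_int_pi]
    exact ref0_mem_rect
  · have h : ((2*m + 1 : ℤ) : ℝ) * (π/2) = (0 + π/2) + (m : ℝ) * π := by push_cast; ring
    rw [h, show ((m:ℝ)*π) = ((m:ℤ):ℝ)*π by push_cast; ring, refE_int_pi, refE_pi2]
    exact mul_mem negE_mem_rect ref0_mem_rect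

lemma refE_quarterpi_mem_square (n : ℤ) : refE (n * (π/4)) ∈ squareGroup := by
  obtain ⟨m, r, hr, rfl⟩ : ∃ m r : ℤ, (r = 0 ∨ r = 1 ∨ r = 2 ∨ r = 3) ∧ n = 4*m + r :=
    ⟨n / 4, n % 4, by omega, by omega⟩
  rcases hr with rfl | rfl | rfl | rfl
  · have h : ((4*m + 0 : ℤ) : ℝ) * (π/4) = 0 + ((m:ℤ) : ℝ) * π := by push_cast; ring
    rw [h, refE_int_pi]; exact ref0_mem_square
  · have h : ((4*m + 1 : ℤ) : ℝ) * (π/4) = π/4 + ((m:ℤ) : ℝ) * π := by push_cast; ring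
    rw [h, refE_int_pi]; exact refpi4_mem_square
  · have h : ((4*m + 2 : ℤ) : ℝ) * (π/4) = (0 + π/2) + ((m:ℤ) : ℝ) * π := by push_cast; ring
    rw [h, refE_int_pi, refE_pi2]; exact mul_mem negE_mem_square ref0_mem_square
  · have h : ((4*m + 3 : ℤ) : ℝ) * (π/4) = (π/4 + π/2) + ((m:ℤ) : ℝ) * π := by push_cast; ring
    rw [h, refE_int_pi, refE_pi2]; exact mul_mem negE_mem_square refpi4_mem_square

section Main
variable (C : Fin 2 → Fin 2 → Fin 2 → Fin 2 → ℝ)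

noncomputable def genH : Set ↥(Matrix.orthogonalGroup (Fin 2) ℝ) :=
  ({Q : ↥(Matrix.orthogonalGroup (Fin 2) ℝ) | (Q : Matrix (Fin 2) (Fin 2) ℝ) = -1} ∪
   {Q : ↥(Matrix.orthogonalGroup (Fin 2) ℝ) |
      ∃ θ : ℝ, (Q : Matrix (Fin 2) (Fin 2) ℝ) = Ref θ ∧ IsSymTrans C (Ref θ)})

lemma iso_case (hall : ∀ θ, IsSymTrans C (Ref θ)) : Subgroup.closure (genH C) = ⊤ := by
  rw [eq_top_iff]
  intro Q _
  rcases orth_classify (Q : Matrix (Fin 2) (Fin 2) ℝ) Q.2 with ⟨ψ, hψ⟩ | ⟨ψ, hψ⟩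
  · have hQ : Q = refE (ψ/2) * refE 0 := by
      apply Subtype.ext
      push_cast [refE]
      rw [ref_mul_ref, hψ]
      congr 1; ring
    rw [hQ]
    exact mul_mem (Subgroup.subset_closure (Or.inr ⟨ψ/2, rfl, hall _⟩))
      (Subgroup.subset_closure (Or.inr ⟨0, rfl, hall 0⟩))
  · exact Subgroup.subset_closure (Or.inr ⟨ψ, hψ, hall ψ⟩)

lemma oblique_case (hnone : ∀ θ, ¬ IsSymTrans C (Ref θ)) :
    Subgroup.closure (genH C) = obliqueGroup := by
  unfold genH obliqueGroup
  congr 1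
  rw [Set.union_eq_self_of_subset_right]
  rintro Q ⟨θ, -, hsym⟩
  exact absurd hsym (hnone θ)

lemma map_closure_eq (φ : ℝ) (s : Set ↥(Matrix.orthogonalGroup (Fin 2) ℝ)) :
    Subgroup.map (MulAut.conj (rotE φ)).toMonoidHom (Subgroup.closure s)
      = Subgroup.closure ((MulAut.conj (rotE φ)).toMonoidHom '' s) :=
  MonoidHom.map_closure _ _

lemma rect_case (β : ℝ) (hchar : ∀ θ, (IsSymTrans C (Ref θ) ↔ ∃ n : ℤ, θ = β + n * (π/2))) :
    Subgroup.map (MulAut.conj (rotE (-β))).toMonoidHom (Subgroup.closure (genH C))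
      = rectGroup := by
  rw [map_closure_eq]
  apply le_antisymm
  · rw [Subgroup.closure_le]
    rintro Q ⟨x, hx, rfl⟩
    rcases hx with hx | ⟨θ, hθ, hsym⟩
    · have : x = negE := Subtype.ext hx
      rw [this]
      show (MulAut.conj (rotE (-β))) negE ∈ _
      rw [conj_neg]; exact negE_mem_rect
    · obtain ⟨n, rfl⟩ := (hchar θ).mp hsym
      have hxe : x = refE (β + n * (π/2)) := Subtype.ext hθ
      rw [hxe]
      show (MulAut.conj (rotE (-β))) (refE _) ∈ _
      rw [conj_ref, show β + (n:ℝ) * (π/2) + -β = (n:ℝ) * (π/2) by ring]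
      exact refE_halfpi_mem_rect n
  · rw [rectGroup, Subgroup.closure_le]
    rintro Q (hQ | hQ)
    · refine Subgroup.subset_closure ⟨negE, Or.inl rfl, ?_⟩
      show (MulAut.conj (rotE (-β))) negE = Q
      rw [conj_neg]; exact (Subtype.ext hQ).symm
    · refine Subgroup.subset_closure ⟨refE β, Or.inr ⟨β, rfl, (hchar β).mpr ⟨0, by push_cast; ring⟩⟩, ?_⟩
      show (MulAut.conj (rotE (-β))) (refE β) = Q
      rw [conj_ref, show β + -β = 0 by ring]
      exact (Subtype.ext hQ).symm

lemma square_case (β : ℝ) (hchar : ∀ θ, (IsSymTrans C (Ref θ) ↔ ∃ n : ℤ, θ = β + n * (π/4))) :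
    Subgroup.map (MulAut.conj (rotE (-β))).toMonoidHom (Subgroup.closure (genH C))
      = squareGroup := by
  rw [map_closure_eq]
  apply le_antisymm
  · rw [Subgroup.closure_le]
    rintro Q ⟨x, hx, rfl⟩
    rcases hx with hx | ⟨θ, hθ, hsym⟩
    · have : x = negE := Subtype.ext hx
      rw [this]
      show (MulAut.conj (rotE (-β))) negE ∈ _
      rw [conj_neg]; exact negE_mem_square
    · obtain ⟨n, rfl⟩ := (hchar θ).mp hsym
      have hxe : x = refE (β + n * (π/4)) := Subtype.ext hθ
      rw [hxe]
      show (MulAut.conj (rotE (-β))) (refE _) ∈ _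
      rw [conj_ref, show β + (n:ℝ) * (π/4) + -β = (n:ℝ) * (π/4) by ring]
      exact refE_quarterpi_mem_square n
  · rw [squareGroup, Subgroup.closure_le]
    rintro Q (hQ | hQ | hQ)
    · refine Subgroup.subset_closure ⟨negE, Or.inl rfl, ?_⟩
      show (MulAut.conj (rotE (-β))) negE = Q
      rw [conj_neg]; exact (Subtype.ext hQ).symm
    · refine Subgroup.subset_closure
        ⟨refE β, Or.inr ⟨β, rfl, (hchar β).mpr ⟨0, by push_cast; ring⟩⟩, ?_⟩
      show (MulAut.conj (rotE (-β))) (refE β) = Q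
      rw [conj_ref, show β + -β = 0 by ring]
      exact (Subtype.ext hQ).symm
    · refine Subgroup.subset_closure
        ⟨refE (β + π/4), Or.inr ⟨β + π/4, rfl, (hchar _).mpr ⟨1, by push_cast; ring⟩⟩, ?_⟩
      show (MulAut.conj (rotE (-β))) (refE (β + π/4)) = Q
      rw [conj_ref, show β + π/4 + -β = π/4 by ring]
      exact (Subtype.ext hQ).symm

lemma rot_det (φ : ℝ) : (Rot φ).det = 1 := by
  rw [Rot, Matrix.det_fin_two_of]
  nlinarith [Real.sin_sq_add_cos_sq φ]

lemma map_conj_zero (K : Subgroup ↥(Matrix.orthogonalGroup (Fin 2) ℝ)) :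
    Subgroup.map (MulAut.conj (rotE 0)).toMonoidHom K = K := by
  have h1 : rotE 0 = 1 := Subtype.ext rot_zero
  ext x
  constructor
  · rintro ⟨y, hy, rfl⟩
    simpa [h1] using hy
  · intro hx
    exact ⟨x, hx, by simp [h1]⟩

end Main

/-- the subgroup `H` of O(2) generated by `-I` together with all
reflections `Ref θ` that are symmetry transformations of `C` is, up to
conjugation by a rotation, one of the four standard symmetry groups. -/
theorem statement1 (C : Fin 2 → Fin 2 → Fin 2 → Fin 2 → ℝ) (hC : IsElast2 C)
    (H : Subgroup ↥(Matrix.orthogonalGroup (Fin 2) ℝ))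
    (hH : H = Subgroup.closure
      ({Q : ↥(Matrix.orthogonalGroup (Fin 2) ℝ) | (Q : Matrix (Fin 2) (Fin 2) ℝ) = -1} ∪
       {Q : ↥(Matrix.orthogonalGroup (Fin 2) ℝ) |
          ∃ θ : ℝ, (Q : Matrix (Fin 2) (Fin 2) ℝ) = Ref θ ∧ IsSymTrans C (Ref θ)})) :
    ∃ R : Matrix (Fin 2) (Fin 2) ℝ, R ∈ Matrix.orthogonalGroup (Fin 2) ℝ ∧ R.det = 1 ∧
      ((fun M => R * M * Rᵀ) ''
          (Subtype.val '' (H : Set ↥(Matrix.orthogonalGroup (Fin 2) ℝ)))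
        = Subtype.val '' (obliqueGroup : Set ↥(Matrix.orthogonalGroup (Fin 2) ℝ)) ∨
       (fun M => R * M * Rᵀ) ''
          (Subtype.val '' (H : Set ↥(Matrix.orthogonalGroup (Fin 2) ℝ)))
        = Subtype.val '' (rectGroup : Set ↥(Matrix.orthogonalGroup (Fin 2) ℝ)) ∨
       (fun M => R * M * Rᵀ) ''
          (Subtype.val '' (H : Set ↥(Matrix.orthogonalGroup (Fin 2) ℝ)))
        = Subtype.val '' (squareGroup : Set ↥(Matrix.orthogonalGroup (Fin 2) ℝ)) ∨
       (fun M => R * M * Rᵀ) ''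
          (Subtype.val '' (H : Set ↥(Matrix.orthogonalGroup (Fin 2) ℝ)))
        = Subtype.val '' (isoGroup : Set ↥(Matrix.orthogonalGroup (Fin 2) ℝ))) := by
  have hH' : H = Subgroup.closure (genH C) := hH
  rcases case_analysis C hC with hall | hnone | ⟨β, hchar⟩ | ⟨β, hchar⟩
  · refine ⟨Rot 0, rot_mem 0, rot_det 0, Or.inr (Or.inr (Or.inr ?_))⟩
    rw [conj_image 0 H, map_conj_zero, hH', iso_case C hall]
    rfl
  · refine ⟨Rot 0, rot_mem 0, rot_det 0, Or.inl ?_⟩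
    rw [conj_image 0 H, map_conj_zero, hH', oblique_case C hnone]
  · refine ⟨Rot (-β), rot_mem _, rot_det _, Or.inr (Or.inl ?_)⟩
    rw [conj_image (-β) H, hH', rect_case C β hchar]
  · refine ⟨Rot (-β), rot_mem _, rot_det _, Or.inr (Or.inr (Or.inl ?_))⟩
    rw [conj_image (-β) H, hH', square_case C β hchar]


end AuxLemmas
end

section
/- Let C be a two-dimensional elasticity tensor and let θ ∈ ℝ satisfy θ ≠ kπ/2 for every integer k. If both Ref(0) and Ref(θ) are symmetry transformations of C, then C₁₁₁₂ = C₂₂₁₂ = 0, C₁₁₁₁ = C₂₂₂₂, and either cos(2θ) = 0 (so that θ is π/4 or 3π/4 modulo π) or C₁₂₁₂ = (C₁₁₁₁ − C₁₁₂₂)/2. -/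
open Matrix Real

/-- two non-orthogonal distinct lines of reflection symmetry. -/
theorem statement4 (C : Fin 2 → Fin 2 → Fin 2 → Fin 2 → ℝ) (hC : IsElast2 C)
    (θ : ℝ) (hθ : ∀ k : ℤ, θ ≠ k * π / 2)
    (h0 : IsSymTrans C (Ref 0)) (hθsym : IsSymTrans C (Ref θ)) :
    C 0 0 0 1 = 0 ∧ C 1 1 0 1 = 0 ∧ C 0 0 0 0 = C 1 1 1 1 ∧
      (Real.cos (2*θ) = 0 ∨ C 0 1 0 1 = (C 0 0 0 0 - C 0 0 1 1) / 2) := by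
  obtain ⟨hm1, hm2, hmaj⟩ := hC
  -- sin (2θ) ≠ 0
  have hs : Real.sin (2*θ) ≠ 0 := by
    intro h
    rcases Real.sin_eq_zero_iff.mp h with ⟨n, hn⟩
    exact hθ n (by linarith)
  -- zeros from Ref 0 symmetry (odd number of index 1)
  have z1 : C 0 0 0 1 = 0 := by
    have := h0 0 0 0 1; simp [Ref, Fin.sum_univ_two] at this; linarith
  have z2 : C 0 0 1 0 = 0 := by
    have := h0 0 0 1 0; simp [Ref, Fin.sum_univ_two] at this; linarith
  have z3 : C 0 1 0 0 = 0 := by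
    have := h0 0 1 0 0; simp [Ref, Fin.sum_univ_two] at this; linarith
  have z4 : C 1 0 0 0 = 0 := by
    have := h0 1 0 0 0; simp [Ref, Fin.sum_univ_two] at this; linarith
  have z5 : C 0 1 1 1 = 0 := by
    have := h0 0 1 1 1; simp [Ref, Fin.sum_univ_two] at this; linarith
  have z6 : C 1 0 1 1 = 0 := by
    have := h0 1 0 1 1; simp [Ref, Fin.sum_univ_two] at this; linarith
  have z7 : C 1 1 0 1 = 0 := by
    have := h0 1 1 0 1; simp [Ref, Fin.sum_univ_two] at this; linarith
  have z8 : C 1 1 1 0 = 0 := by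
    have := h0 1 1 1 0; simp [Ref, Fin.sum_univ_two] at this; linarith
  -- identifications
  have e1 : C 0 1 1 0 = C 0 1 0 1 := (hm2 0 1 1 0).symm ▸ (hm2 0 1 0 1).symm
  have e2 : C 1 0 0 1 = C 0 1 0 1 := by rw [hm1 1 0 0 1, hm2 0 1 0 1]
  have e3 : C 1 0 1 0 = C 0 1 0 1 := by rw [hm1 1 0 1 0, hm2 0 1 1 0]
  have e4 : C 1 1 0 0 = C 0 0 1 1 := hmaj 1 1 0 0
  -- expand the two key equations of Ref θ symmetry
  have h1 := hθsym 0 0 0 0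
  have h2 := hθsym 0 1 0 1
  simp only [Ref, Fin.sum_univ_two, Matrix.cons_val', Matrix.cons_val_zero,
    Matrix.cons_val_one, Matrix.head_cons, Matrix.head_fin_const,
    Matrix.cons_val_fin_one, Matrix.of_apply] at h1 h2
  rw [z1, z2, z3, z4, z5, z6, z7, z8, e1, e2, e3, e4] at h1 h2
  have hpyth : Real.sin (2*θ)^2 + Real.cos (2*θ)^2 = 1 := Real.sin_sq_add_cos_sq _
  set c := Real.cos (2*θ) with hc
  set s := Real.sin (2*θ) with hsdef
  set A := C 0 0 0 0
  set B := C 1 1 1 1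
  set D := C 0 0 1 1
  set G := C 0 1 0 1
  have hkey : s^2 * (c^2 * (A + B - 2*D - 4*G)) = 0 := by
    linear_combination (-1 : ℝ) * h2 - (c^2 + s^2 + 1) * G * hpyth
  have hz : s^2 * (B - A - c^2 * (A + B - 2*D - 4*G)) = 0 := by
    linear_combination (-1 : ℝ) * h1 - ((1 + c^2) * A + s^2 * B) * hpyth
  have hs2 : s^2 ≠ 0 := pow_ne_zero _ hs
  have hcS : c^2 * (A + B - 2*D - 4*G) = 0 :=
    (mul_eq_zero.mp hkey).resolve_left hs2
  have hBA : B - A - c^2 * (A + B - 2*D - 4*G) = 0 :=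
    (mul_eq_zero.mp hz).resolve_left hs2
  have hAB : A = B := by linear_combination (-1 : ℝ) * hBA - hcS
  refine ⟨z1, z7, hAB, ?_⟩
  rcases mul_eq_zero.mp hcS with h | h
  · exact Or.inl (by simpa using pow_eq_zero_iff (n := 2) (by norm_num) |>.mp h)
  · exact Or.inr (by linarith)
end

section
/- Let C be a two-dimensional elasticity tensor and let θ ∈ ℝ satisfy θ ≠ kπ for every integer k. If the rotation Rot(θ) is a symmetry transformation of C, then C₁₁₁₂ = −C₂₂₁₂ and C₁₁₁₁ = C₂₂₂₂. -/
open Matrix Real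

/-- restrictions imposed by a nontrivial rotation symmetry. -/
theorem statement6 (C : Fin 2 → Fin 2 → Fin 2 → Fin 2 → ℝ) (hC : IsElast2 C)
    (θ : ℝ) (hθ : ∀ k : ℤ, θ ≠ k * π)
    (hrot : IsSymTrans C (Rot θ)) :
    C 0 0 0 1 = -C 1 1 0 1 ∧ C 0 0 0 0 = C 1 1 1 1 := by
  obtain ⟨hm1, hm2, hmaj⟩ := hC
  have hs : Real.sin θ ≠ 0 := Real.sin_ne_zero_iff.mpr fun n => (hθ n).symm
  set c := Real.cos θ with hc
  set s := Real.sin θ with hsdef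
  have hpy : s ^ 2 + c ^ 2 = 1 := Real.sin_sq_add_cos_sq θ
  -- alias equalities
  have a1 : C 0 0 1 0 = C 0 0 0 1 := (hm2 0 0 0 1).symm
  have a2 : C 0 1 0 0 = C 0 0 0 1 := (hmaj 0 0 0 1).symm
  have a3 : C 1 0 0 0 = C 0 0 0 1 := ((hm1 0 1 0 0).symm).trans a2
  have a4 : C 1 1 1 0 = C 1 1 0 1 := (hm2 1 1 0 1).symm
  have a5 : C 0 1 1 1 = C 1 1 0 1 := (hmaj 1 1 0 1).symm
  have a6 : C 1 0 1 1 = C 1 1 0 1 := ((hm1 0 1 1 1).symm).trans a5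
  have a7 : C 1 1 0 0 = C 0 0 1 1 := (hmaj 0 0 1 1).symm
  have a8 : C 0 1 1 0 = C 0 1 0 1 := (hm2 0 1 0 1).symm
  have a9 : C 1 0 0 1 = C 0 1 0 1 := (hm1 0 1 0 1).symm
  have a10 : C 1 0 1 0 = C 0 1 0 1 := ((hm1 0 1 1 0).symm).trans a8
  have h1 := hrot 0 0 0 0
  have h2 := hrot 1 1 1 1
  have h3 := hrot 0 0 0 1
  have h4 := hrot 1 1 0 1
  simp only [Rot, Fin.sum_univ_two, Matrix.of_apply, Matrix.cons_val', Matrix.cons_val_zero,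
    Matrix.cons_val_one, Matrix.head_cons, Matrix.empty_val',
    Matrix.cons_val_fin_one, Matrix.head_fin_const, ← hc, ← hsdef,
    a1, a2, a3, a4, a5, a6, a7, a8, a9, a10] at h1 h2 h3 h4
  have hX : C 0 0 0 1 + C 1 1 0 1 = 0 := by
    have key : 4 * s * (C 0 0 0 1 + C 1 1 0 1) = 0 := by
      linear_combination c * h1 - c * h2 + 2 * s * h3 + 2 * s * h4 +
        (-2*s*(C 1 1 0 1 + C 0 0 0 1) - 2*s^3*(C 1 1 0 1 + C 0 0 0 1)
          + c*(C 0 0 0 0 - C 1 1 1 1) + c*s^2*(C 0 0 0 0 - C 1 1 1 1)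
          - 2*c^2*s*(C 1 1 0 1 + C 0 0 0 1) + c^3*(C 0 0 0 0 - C 1 1 1 1)) * hpy
    have h4s : (4 : ℝ) * s ≠ 0 := by positivity
    exact (mul_eq_zero.mp key).resolve_left h4s
  refine ⟨by linarith, ?_⟩
  have key2 : 2 * s ^ 2 * (C 0 0 0 0 - C 1 1 1 1) = 0 := by
    linear_combination h1 - h2 - 4 * c * s * hX +
      ((C 0 0 0 0 - C 1 1 1 1) - s^2*(C 0 0 0 0 - C 1 1 1 1)
        - 4*c*s*(C 1 1 0 1 + C 0 0 0 1) + c^2*(C 0 0 0 0 - C 1 1 1 1)) * hpy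
  have h2s : (2 : ℝ) * s ^ 2 ≠ 0 := by positivity
  have := (mul_eq_zero.mp key2).resolve_left h2s
  linarith
end

section
/- Let C be a two-dimensional elasticity tensor and let θ ∈ ℝ satisfy θ ≠ kπ for every integer k and sin(2θ) ≠ 0. If the rotation Rot(θ) is a symmetry transformation of C, then C₁₁₁₂ = C₂₂₁₂ = 0, C₁₁₁₁ = C₂₂₂₂, and C₁₂₁₂ = (C₁₁₁₁ − C₁₁₂₂)/2; that is, C satisfies the isotropic restrictions. -/
open Matrix Real

/-- a rotation symmetry with `sin (2θ) ≠ 0` forces the isotropic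
restrictions. -/
theorem statement7 (C : Fin 2 → Fin 2 → Fin 2 → Fin 2 → ℝ) (hC : IsElast2 C)
    (θ : ℝ) (hθ : ∀ k : ℤ, θ ≠ k * π) (hsin : Real.sin (2*θ) ≠ 0)
    (hrot : IsSymTrans C (Rot θ)) :
    C 0 0 0 1 = 0 ∧ C 1 1 0 1 = 0 ∧ C 0 0 0 0 = C 1 1 1 1 ∧
      C 0 1 0 1 = (C 0 0 0 0 - C 0 0 1 1) / 2 := by
  obtain ⟨hm1, hm2, hmaj⟩ := hC
  set s := Real.sin θ with hsdef
  set c := Real.cos θ with hcdef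
  have hpy : s ^ 2 + c ^ 2 = 1 := Real.sin_sq_add_cos_sq θ
  have hsc : 2 * (s * c) ≠ 0 := by
    rw [Real.sin_two_mul] at hsin; rwa [mul_assoc] at hsin
  have hs : s ≠ 0 := by
    intro h; apply hsc; rw [h]; ring
  have hc : c ≠ 0 := by
    intro h; apply hsc; rw [h]; ring
  -- canonical rewrites
  have e1 : C 0 0 1 0 = C 0 0 0 1 := (hm2 0 0 0 1).symm
  have e2 : C 0 1 0 0 = C 0 0 0 1 := hmaj 0 1 0 0
  have e3 : C 1 0 0 0 = C 0 0 0 1 := (hm1 0 1 0 0).symm.trans e2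
  have e4 : C 1 1 0 0 = C 0 0 1 1 := hmaj 1 1 0 0
  have e5 : C 0 1 1 0 = C 0 1 0 1 := (hm2 0 1 0 1).symm
  have e6 : C 1 0 0 1 = C 0 1 0 1 := (hm1 0 1 0 1).symm
  have e7 : C 1 0 1 0 = C 0 1 0 1 := ((hm1 0 1 1 0).symm).trans e5
  have e8 : C 1 0 1 1 = C 0 1 1 1 := (hm1 0 1 1 1).symm
  have e9 : C 1 1 0 1 = C 0 1 1 1 := hmaj 1 1 0 1
  have e10 : C 1 1 1 0 = C 0 1 1 1 := (hm2 1 1 0 1).symm.trans e9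
  have h1 := hrot 0 0 0 0
  have h2 := hrot 1 1 1 1
  have h3 := hrot 0 0 0 1
  have h4 := hrot 0 1 1 1
  simp only [Rot, Fin.sum_univ_two, Matrix.cons_val', Matrix.cons_val_zero,
    Matrix.cons_val_one, Matrix.head_cons, Matrix.head_fin_const, Matrix.empty_val',
    Matrix.cons_val_fin_one, Matrix.of_apply, ← hsdef, ← hcdef] at h1 h2 h3 h4
  rw [e1, e2, e3, e4, e5, e6, e7, e8, e9, e10] at h1 h2 h3 h4
  set a := C 0 0 0 0
  set b := C 1 1 1 1
  set cc := C 0 0 1 1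
  set d := C 0 1 0 1
  set e := C 0 0 0 1
  set f := C 0 1 1 1
  have hA0 : s * (c * (a - b) - 2 * s * (e + f)) = 0 := by
    linear_combination (-1 : ℝ) * h3 - h4 -
      ((1 + c^2 - s^2) * (e + f) + s * c * (a - b)) * hpy
  have hA : c * (a - b) - 2 * s * (e + f) = 0 := by
    rcases mul_eq_zero.mp hA0 with h | h
    · exact absurd h hs
    · exact h
  have hB0 : s * (s * (a - b) + 2 * c * (e + f)) = 0 := by
    linear_combination (1 / 2 : ℝ) * h1 - (1 / 2 : ℝ) * h2 -
      ((1 + c^2 - s^2) * (b - a) / 2 + 2 * s * c * (e + f)) * hpy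
  have hB : s * (a - b) + 2 * c * (e + f) = 0 := by
    rcases mul_eq_zero.mp hB0 with h | h
    · exact absurd h hs
    · exact h
  have hX : a - b = 0 := by
    linear_combination c * hA + s * hB + (b - a) * hpy
  have hef0 : c * (e + f) = 0 := by
    linear_combination (1 / 2 : ℝ) * hB - (s / 2) * hX
  have hef : e + f = 0 := by
    rcases mul_eq_zero.mp hef0 with h | h
    · exact absurd h hc
    · exact h
  have hI0 : (2 * s * c) * (-(c * s * (a + b - 2 * cc - 4 * d)) +
      2 * (e - f) * (1 - 2 * c^2)) = 0 := by
    linear_combination (-1 : ℝ) * h1 - h2 -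
      ((1 + c^2 + s^2) * (a + b) + 4 * s * c * (e - f)) * hpy
  have hI : -(c * s * (a + b - 2 * cc - 4 * d)) + 2 * (e - f) * (1 - 2 * c^2) = 0 := by
    rcases mul_eq_zero.mp hI0 with h | h
    · exact absurd (by linarith [h] : 2 * (s * c) = 0) hsc
    · exact h
  have hV0 : (s * c) * (8 * c * s * (e - f) +
      (a + b - 2 * cc - 4 * d) * (1 - 2 * c^2)) = 0 := by
    linear_combination h3 - h4 -
      ((1 + c^2 + s^2) * (f - e) + s * c * (-4 * d - 2 * cc + a + b)) * hpy
  have hV : 8 * c * s * (e - f) + (a + b - 2 * cc - 4 * d) * (1 - 2 * c^2) = 0 := by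
    rcases mul_eq_zero.mp hV0 with h | h
    · exact absurd h (mul_ne_zero hs hc)
    · exact h
  have hI2 : -(c * s * (a + b - 2 * cc - 4 * d)) + 4 * e * (s^2 - c^2) = 0 := by
    linear_combination hI + 4 * e * hpy + 2 * (1 - 2 * c^2) * hef
  have hV2 : 16 * c * s * e + (a + b - 2 * cc - 4 * d) * (s^2 - c^2) = 0 := by
    linear_combination hV + 8 * c * s * hef + (a + b - 2 * cc - 4 * d) * hpy
  have he : e = 0 := by
    linear_combination ((s^2 - c^2) / 4) * hI2 + (c * s / 4) * hV2 -
      e * (s^2 + c^2 + 1) * hpy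
  have hf : f = 0 := by linear_combination hef - he
  have hY0 : (c * s) * (a + b - 2 * cc - 4 * d) = 0 := by
    linear_combination (-1 : ℝ) * hI2 + 4 * (s^2 - c^2) * he
  have hY : a + b - 2 * cc - 4 * d = 0 := by
    rcases mul_eq_zero.mp hY0 with h | h
    · exact absurd h (mul_ne_zero hc hs)
    · exact h
  refine ⟨he, e9.trans hf, by linear_combination hX, by linear_combination (-1/4 : ℝ) * hY - (1/4 : ℝ) * hX⟩
end

section
/- Let C be a two-dimensional elasticity tensor with C₁₁₁₂ ≠ 0 such that the rotation Rot(π/2) is a symmetry transformation of C. Then there exists α ∈ (0, π/4) such that (C₁₁₁₁ − C₁₁₂₂ − 2C₁₂₁₂)/C₁₁₁₂ = 2(cot(2α) − tan(2α)); moreover, for every such α, the reflection Ref(α) is a symmetry transformation of C. -/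
open Matrix Real

/-!
Invariance under the quarter turn forces `C₂₂₂₂ = C₁₁₁₁` and `C₂₂₁₂ = -C₁₁₁₂`, so `C` is
determined by `a = C₁₁₁₁`, `b = C₁₁₂₂`, `c = C₁₂₁₂`, `d = C₁₁₁₂`. For such a tensor `Ref θ` is a
symmetry as soon as `(a - b - 2c) sin 4θ = 4d cos 4θ`. Since `cot x - tan x = 2 cot 2x`, the
condition on `α` says `(a - b - 2c) / d = 4 cot 4α`; it has a solution because `cot` maps `(0, π)`
onto `ℝ`.
-/

def voigt : Fin 2 → Fin 2 → Fin 3 := ![![0, 2], ![2, 1]]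

/-- The tensor with Voigt matrix `!![a, b, d; b, a, -d; d, -d, c]`, i.e. `C₁₁₁₁ = C₂₂₂₂ = a`,
`C₁₁₂₂ = b`, `C₁₂₁₂ = c`, `C₁₁₁₂ = -C₂₂₁₂ = d`. -/
def tetragonal (a b c d : ℝ) (i j k l : Fin 2) : ℝ :=
  !![a, b, d; b, a, -d; d, -d, c] (voigt i j) (voigt k l)

theorem IsElast2.eq_tetragonal {C : Fin 2 → Fin 2 → Fin 2 → Fin 2 → ℝ} (hC : IsElast2 C)
    (hrot : IsSymTrans C (Rot (π / 2))) :
    C = tetragonal (C 0 0 0 0) (C 0 0 1 1) (C 0 1 0 1) (C 0 0 0 1) := by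
  obtain ⟨hij, hkl, hmaj⟩ := hC
  have h₁₁₁₁ := hrot 0 0 0 0
  have h₂₁₁₁ := hrot 1 0 0 0
  simp only [Rot, cos_pi_div_two, sin_pi_div_two, Fin.sum_univ_two, of_apply, cons_val',
    cons_val_zero, cons_val_one, cons_val_fin_one, Fin.isValue, mul_zero, zero_mul, mul_one,
    one_mul, mul_neg, neg_mul, neg_neg, neg_zero, zero_add, add_zero] at h₁₁₁₁ h₂₁₁₁
  ext i j k l
  fin_cases i <;> fin_cases j <;> fin_cases k <;> fin_cases l <;>
    simp only [tetragonal, voigt, of_apply, cons_val', cons_val_zero, cons_val_one,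
      cons_val_fin_one, cons_val, Fin.isValue, Fin.zero_eta, Fin.mk_one] <;>
    grind

/-- With `p = cos 2θ`, `q = sin 2θ`, the hypothesis reads `(a - b - 2c) pq = 2d (p² - q²)`; every
component of the symmetry condition is this identity times a quadratic form, modulo `p² + q² = 1`. -/
theorem isSymTrans_tetragonal_ref {a b c d θ : ℝ}
    (h : (a - b - 2 * c) * sin (4 * θ) = 4 * d * cos (4 * θ)) :
    IsSymTrans (tetragonal a b c d) (Ref θ) := by
  rw [show 4 * θ = 2 * (2 * θ) by ring, sin_two_mul (2 * θ), cos_two_mul' (2 * θ)] at h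
  have hpq := sin_sq_add_cos_sq (2 * θ)
  unfold Ref
  generalize sin (2 * θ) = q at h hpq ⊢
  generalize cos (2 * θ) = p at h hpq ⊢
  intro i j k l
  fin_cases i <;> fin_cases j <;> fin_cases k <;> fin_cases l <;>
    simp only [tetragonal, voigt, Fin.sum_univ_two, of_apply, cons_val', cons_val_zero,
      cons_val_one, cons_val_fin_one, cons_val, Fin.isValue, Fin.zero_eta, Fin.mk_one] <;>
    grind

theorem Real.cot_sub_tan {x : ℝ} (hs : sin x ≠ 0) (hc : cos x ≠ 0) :
    cot x - tan x = 2 * cot (2 * x) := by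
  rw [cot_eq_cos_div_sin, cot_eq_cos_div_sin, tan_eq_sin_div_cos, sin_two_mul, cos_two_mul']
  field_simp

theorem Real.cot_pi_div_two_sub (x : ℝ) : cot (π / 2 - x) = tan x := by
  rw [cot_eq_cos_div_sin, cos_pi_div_two_sub, sin_pi_div_two_sub, tan_eq_sin_div_cos]

theorem two_mul_cot_sub_tan_two_mul {α : ℝ} (hα : α ∈ Set.Ioo 0 (π / 4)) :
    2 * (cot (2 * α) - tan (2 * α)) = 4 * cot (4 * α) := by
  have hs : sin (2 * α) ≠ 0 :=
    (sin_pos_of_pos_of_lt_pi (by linarith [hα.1]) (by linarith [hα.2, pi_pos])).ne'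
  have hc : cos (2 * α) ≠ 0 :=
    (cos_pos_of_mem_Ioo ⟨by linarith [hα.1, pi_pos], by linarith [hα.2]⟩).ne'
  rw [cot_sub_tan hs hc, show 4 * α = 2 * (2 * α) by ring]
  ring

theorem exists_mem_Ioo_eq_two_mul_cot_sub_tan (r : ℝ) :
    ∃ α ∈ Set.Ioo 0 (π / 4), r = 2 * (cot (2 * α) - tan (2 * α)) := by
  have hα : (π / 2 - arctan (r / 4)) / 4 ∈ Set.Ioo 0 (π / 4) :=
    ⟨by linarith [arctan_lt_pi_div_two (r / 4)], by linarith [neg_pi_div_two_lt_arctan (r / 4)]⟩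
  refine ⟨_, hα, ?_⟩
  rw [two_mul_cot_sub_tan_two_mul hα, mul_div_cancel₀ _ four_ne_zero, cot_pi_div_two_sub,
    tan_arctan]
  ring

/-- Case 2 in the classification: a tensor with `C₁₁₁₂ ≠ 0`
invariant under `Rot (π/2)` admits a reflection symmetry `Ref α` with
`α ∈ (0, π/4)`. -/
theorem statement8 (C : Fin 2 → Fin 2 → Fin 2 → Fin 2 → ℝ) (hC : IsElast2 C)
    (hne : C 0 0 0 1 ≠ 0) (hrot : IsSymTrans C (Rot (π/2))) :
    (∃ α ∈ Set.Ioo (0:ℝ) (π/4),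
      (C 0 0 0 0 - C 0 0 1 1 - 2 * C 0 1 0 1) / C 0 0 0 1
        = 2 * (Real.cot (2*α) - Real.tan (2*α))) ∧
    (∀ α ∈ Set.Ioo (0:ℝ) (π/4),
      (C 0 0 0 0 - C 0 0 1 1 - 2 * C 0 1 0 1) / C 0 0 0 1
        = 2 * (Real.cot (2*α) - Real.tan (2*α)) →
      IsSymTrans C (Ref α)) := by
  refine ⟨exists_mem_Ioo_eq_two_mul_cot_sub_tan _, fun α hα h ↦ ?_⟩
  have hsin : sin (4 * α) ≠ 0 :=
    (sin_pos_of_pos_of_lt_pi (by linarith [hα.1]) (by linarith [hα.2])).ne'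
  rw [two_mul_cot_sub_tan_two_mul hα, cot_eq_cos_div_sin, div_eq_iff hne] at h
  rw [hC.eq_tetragonal hrot]
  apply isSymTrans_tetragonal_ref
  rw [h]
  field_simp
end

section
/- Let δ > 0 and let ω : (0,δ) → ℝ be measurable and nonnegative with weighted volume m := ∫_{B_δ(0)⊂ℝ²} ω(‖ξ‖) ‖ξ‖² dξ satisfying 0 < m < ∞. Given real constants C₁₁₁₁, C₁₁₂₂, C₁₁₁₂, C₂₂₁₂, C₂₂₂₂, define Λ₁₁₁₁ = 10C₁₁₁₁ − 20C₁₁₂₂ + 2C₂₂₂₂, Λ₁₁₁₂ = 20C₁₁₁₂ − 12C₂₂₁₂, Λ₁₁₂₂ = (−10C₁₁₁₁ + 76C₁₁₂₂ − 10C₂₂₂₂)/3, Λ₂₂₁₂ = −12C₁₁₁₂ + 20C₂₂₁₂, Λ₂₂₂₂ = 2C₁₁₁₁ − 20C₁₁₂₂ + 10C₂₂₂₂, and define the two-dimensional micromodulus function λ(ξ) := (1/m) · (Λ₁₁₁₁ ξ₁⁴ + 4Λ₁₁₁₂ ξ₁³ξ₂ + 6Λ₁₁₂₂ ξ₁²ξ₂²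 + 4Λ₂₂₁₂ ξ₁ξ₂³ + Λ₂₂₂₂ ξ₂⁴) · ω(‖ξ‖)/‖ξ‖⁶ for ξ ∈ B_δ(0)∖{0}. Then (1/2)∫_{B_δ(0)} λ(ξ) ξ₁⁴ dξ = C₁₁₁₁, (1/2)∫_{B_δ(0)} λ(ξ) ξ₁³ξ₂ dξ = C₁₁₁₂, (1/2)∫_{B_δ(0)} λ(ξ) ξ₁²ξ₂² dξ = C₁₁₂₂, (1/2)∫_{B_δ(0)} λ(ξ) ξ₁ξ₂³ dξ = C₂₂₁₂, and (1/2)∫_{B_δ(0)} λ(ξ) ξ₂⁴ dξ = C₂₂₂₂. -/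
/-!
In polar coordinates `ξ = r (cos θ, sin θ)` every integrand `λ(ξ) ξ_i ξ_j ξ_k ξ_l` splits into the
radial factor `ω(r) r³`, whose integral over `(0, δ)` is `m / (2π)`, times a trigonometric
polynomial of degree 8 in `θ`. Over a full period the circle moments `∫ cos^a θ sin^b θ dθ` with
`a + b = 8` vanish for odd `b` and equal `35π/64, 5π/64, 3π/64` for `b = 0, 2, 4`
(Wallis' recursion together with `sin² = 1 - cos²`). Each matching integral is therefore an
explicit linear combination of the `Λ`'s, and the prescribed `Λ(C)` is exactly the inverse of
this linear map.
-/

open MeasureTheory Real Set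

local notation "ℝ²" => EuclideanSpace ℝ (Fin 2)

lemma EuclideanSpace.norm_mul_cos_mul_sin (r θ : ℝ) :
    ‖(!₂[r * cos θ, r * sin θ] : ℝ²)‖ = |r| := by
  rw [EuclideanSpace.norm_eq, Fin.sum_univ_two, ← sqrt_sq_eq_abs]
  congr 1
  simp only [Real.norm_eq_abs, sq_abs, Matrix.cons_val_zero, Matrix.cons_val_one]
  linear_combination r ^ 2 * sin_sq_add_cos_sq θ

lemma integral_euclideanSpace_fin_two_eq_polar (f : ℝ² → ℝ) :
    ∫ ξ, f ξ = ∫ p in polarCoord.target, p.1 * f !₂[p.1 * cos p.2, p.1 * sin p.2] := by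
  let e : ℝ² ≃ᵐ ℝ × ℝ :=
    (MeasurableEquiv.toLp 2 (Fin 2 → ℝ)).symm.trans MeasurableEquiv.finTwoArrow
  have he : MeasurePreserving e :=
    (volume_preserving_finTwoArrow ℝ).comp
      (EuclideanSpace.volume_preserving_symm_measurableEquiv_toLp (Fin 2))
  have := he.integral_comp' (fun q => f (e.symm q))
  simp only [MeasurableEquiv.symm_apply_apply] at this
  rw [this, ← integral_comp_polarCoord_symm]
  rfl

lemma integral_ball_eq_polar (δ : ℝ) (f : ℝ² → ℝ) :
    ∫ ξ in Metric.ball 0 δ, f ξ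
      = ∫ p in Ioo 0 δ ×ˢ Ioo (-π) π, p.1 * f !₂[p.1 * cos p.2, p.1 * sin p.2] := by
  rw [← integral_indicator measurableSet_ball, integral_euclideanSpace_fin_two_eq_polar,
    ← Ioi_inter_Iio, ← inter_univ (Ioo (-π) π), ← prod_inter_prod,
    ← setIntegral_indicator (measurableSet_Iio.prod .univ)]
  refine setIntegral_congr_fun polarCoord.open_target.measurableSet fun p hp => ?_
  have hr : 0 < p.1 := hp.1
  by_cases h : p.1 < δ
  · rw [indicator_of_mem (by simpa [abs_of_pos hr, EuclideanSpace.norm_mul_cos_mul_sin] using h),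
      indicator_of_mem (by simpa using h)]
  · rw [indicator_of_notMem (by simpa [abs_of_pos hr, EuclideanSpace.norm_mul_cos_mul_sin] using h),
      indicator_of_notMem (by simpa using h), mul_zero]

noncomputable def circleMoment (a b : ℕ) : ℝ := ∫ θ in (-π)..π, cos θ ^ a * sin θ ^ b

lemma circleMoment_zero_zero : circleMoment 0 0 = 2 * π := by
  simp [circleMoment]; ring

lemma circleMoment_add_two_zero (a : ℕ) :
    circleMoment (a + 2) 0 = (a + 1) / (a + 2) * circleMoment a 0 := by
  simp [circleMoment, integral_cos_pow]

lemma circleMoment_add_two (a b : ℕ) :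
    circleMoment a (b + 2) = circleMoment a b - circleMoment (a + 2) b := by
  rw [circleMoment, circleMoment, circleMoment, ← intervalIntegral.integral_sub
    (by apply Continuous.intervalIntegrable; fun_prop)
    (by apply Continuous.intervalIntegrable; fun_prop)]
  refine intervalIntegral.integral_congr fun θ _ => ?_
  linear_combination cos θ ^ a * sin θ ^ b * sin_sq_add_cos_sq θ

lemma circleMoment_of_odd (a : ℕ) {b : ℕ} (hb : Odd b) : circleMoment a b = 0 := by
  obtain ⟨k, rfl⟩ := hb
  simp_rw [circleMoment, mul_comm (cos _ ^ a), integral_sin_pow_odd_mul_cos_pow, cos_neg,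
    intervalIntegral.integral_same]

lemma integral_ball_radial_mul_monomial (δ : ℝ) (g : ℝ → ℝ) (a b : ℕ) :
    ∫ ξ in Metric.ball (0 : ℝ²) δ, g ‖ξ‖ * (ξ 0 ^ a * ξ 1 ^ b)
      = (∫ r in Ioo 0 δ, g r * r ^ (a + b + 1)) * circleMoment a b := by
  rw [integral_ball_eq_polar, circleMoment,
    intervalIntegral.integral_of_le (by linarith [pi_pos]), integral_Ioc_eq_integral_Ioo,
    Measure.volume_eq_prod, ← setIntegral_prod_mul]
  refine setIntegral_congr_fun (measurableSet_Ioo.prod measurableSet_Ioo) fun p hp => ?_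
  simp only [EuclideanSpace.norm_mul_cos_mul_sin, abs_of_pos hp.1.1, Matrix.cons_val_zero,
    Matrix.cons_val_one]
  ring

lemma integral_ball_mul_norm_pow (δ : ℝ) (ω : ℝ → ℝ) (n : ℕ) :
    ∫ ξ in Metric.ball (0 : ℝ²) δ, ω ‖ξ‖ * ‖ξ‖ ^ n
      = (∫ r in Ioo 0 δ, ω r * r ^ (n + 1)) * (2 * π) := by
  simpa only [pow_zero, mul_one, zero_add, pow_one, circleMoment_zero_zero, mul_assoc,
    ← pow_succ] using integral_ball_radial_mul_monomial δ (fun r => ω r * r ^ n) 0 0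

lemma integral_ball_div_pow_mul_monomial (δ : ℝ) (ω : ℝ → ℝ) {k n a b : ℕ} (hab : a + b = k + n) :
    ∫ ξ in Metric.ball (0 : ℝ²) δ, ω ‖ξ‖ / ‖ξ‖ ^ k * (ξ 0 ^ a * ξ 1 ^ b)
      = (∫ r in Ioo 0 δ, ω r * r ^ (n + 1)) * circleMoment a b := by
  rw [integral_ball_radial_mul_monomial δ (fun r => ω r / r ^ k), hab]
  congr 1
  refine setIntegral_congr_fun measurableSet_Ioo fun r hr => ?_
  have : r ≠ 0 := hr.1.ne'
  field_simp
  ring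

lemma integrableOn_radial_mul_monomial {s : Set ℝ²} {g : ℝ → ℝ} (a b : ℕ)
    (hg : IntegrableOn (fun ξ : ℝ² => g ‖ξ‖ * ‖ξ‖ ^ (a + b)) s) :
    IntegrableOn (fun ξ : ℝ² => g ‖ξ‖ * (ξ 0 ^ a * ξ 1 ^ b)) s := by
  have hbdd : ∀ ξ : ℝ², ‖ξ 0 ^ a * ξ 1 ^ b / ‖ξ‖ ^ (a + b)‖ ≤ 1 := fun ξ => by
    rw [norm_div, norm_mul, norm_pow, norm_pow, norm_pow, norm_norm, pow_add]
    exact div_le_one_of_le₀ (by gcongr <;> exact PiLp.norm_apply_le ξ _) (by positivity)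
  refine (hg.mul_bdd (by fun_prop : Measurable _).aestronglyMeasurable (ae_of_all _ hbdd)).congr ?_
  filter_upwards [Measure.ae_ne _ 0] with ξ hξ
  have : ‖ξ‖ ≠ 0 := norm_ne_zero_iff.2 hξ
  field_simp

lemma integrableOn_div_pow_mul_monomial {s : Set ℝ²} {ω : ℝ → ℝ} {k n a b : ℕ}
    (hab : a + b = k + n) (hω : IntegrableOn (fun ξ : ℝ² => ω ‖ξ‖ * ‖ξ‖ ^ n) s) :
    IntegrableOn (fun ξ : ℝ² => ω ‖ξ‖ / ‖ξ‖ ^ k * (ξ 0 ^ a * ξ 1 ^ b)) s := by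
  refine integrableOn_radial_mul_monomial (g := fun r => ω r / r ^ k) a b (hω.congr_fun_ae ?_)
  filter_upwards [Measure.ae_ne _ 0] with ξ hξ
  have : ‖ξ‖ ≠ 0 := norm_ne_zero_iff.2 hξ
  rw [hab]
  field_simp
  ring

lemma integral_quartic_mul_monomial {μ : Measure ℝ²} (f : ℝ² → ℝ) (k c₀ c₁ c₂ c₃ c₄ : ℝ)
    (a b : ℕ)
    (hf : ∀ i j, i + j = a + b + 4 → Integrable (fun ξ : ℝ² => f ξ * (ξ 0 ^ i * ξ 1 ^ j)) μ) :
    ∫ ξ, k * (c₀ * ξ 0 ^ 4 + c₁ * ξ 0 ^ 3 * ξ 1 + c₂ * ξ 0 ^ 2 * ξ 1 ^ 2 + c₃ * ξ 0 * ξ 1 ^ 3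
        + c₄ * ξ 1 ^ 4) * f ξ * (ξ 0 ^ a * ξ 1 ^ b) ∂μ
      = k * (c₀ * ∫ ξ, f ξ * (ξ 0 ^ (a + 4) * ξ 1 ^ b) ∂μ
        + c₁ * ∫ ξ, f ξ * (ξ 0 ^ (a + 3) * ξ 1 ^ (b + 1)) ∂μ
        + c₂ * ∫ ξ, f ξ * (ξ 0 ^ (a + 2) * ξ 1 ^ (b + 2)) ∂μ
        + c₃ * ∫ ξ, f ξ * (ξ 0 ^ (a + 1) * ξ 1 ^ (b + 3)) ∂μ
        + c₄ * ∫ ξ, f ξ * (ξ 0 ^ a * ξ 1 ^ (b + 4)) ∂μ) := by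
  have h₀ := (hf (a + 4) b (by ring)).const_mul c₀
  have h₁ := (hf (a + 3) (b + 1) (by ring)).const_mul c₁
  have h₂ := (hf (a + 2) (b + 2) (by ring)).const_mul c₂
  have h₃ := (hf (a + 1) (b + 3) (by ring)).const_mul c₃
  have h₄ := (hf a (b + 4) (by ring)).const_mul c₄
  rw [← integral_const_mul, ← integral_const_mul, ← integral_const_mul, ← integral_const_mul,
    ← integral_const_mul, ← integral_add h₀ h₁, ← integral_add (by exact h₀.add h₁) h₂,
    ← integral_add (by exact (h₀.add h₁).add h₂) h₃,
    ← integral_add (by exact ((h₀.add h₁).add h₂).add h₃) h₄, ← integral_const_mul]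
  congr 1 with ξ
  ring


theorem statement12_general (δ : ℝ)
    (ω : ℝ → ℝ)
    (m : ℝ)
    (hm : m = ∫ ξ in Metric.ball (0 : EuclideanSpace ℝ (Fin 2)) δ, ω ‖ξ‖ * ‖ξ‖^2)
    (hmint : IntegrableOn (fun ξ : EuclideanSpace ℝ (Fin 2) => ω ‖ξ‖ * ‖ξ‖^2)
      (Metric.ball (0 : EuclideanSpace ℝ (Fin 2)) δ))
    (hmpos : 0 < m)
    (C1111 C1122 C1112 C2212 C2222 : ℝ)
    (Λ1111 Λ1112 Λ1122 Λ2212 Λ2222 : ℝ)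
    (hΛ1111 : Λ1111 = 10*C1111 - 20*C1122 + 2*C2222)
    (hΛ1112 : Λ1112 = 20*C1112 - 12*C2212)
    (hΛ1122 : Λ1122 = (-10*C1111 + 76*C1122 - 10*C2222)/3)
    (hΛ2212 : Λ2212 = -12*C1112 + 20*C2212)
    (hΛ2222 : Λ2222 = 2*C1111 - 20*C1122 + 10*C2222)
    (lam : EuclideanSpace ℝ (Fin 2) → ℝ)
    (hlam : ∀ ξ : EuclideanSpace ℝ (Fin 2), ξ ≠ 0 →
      lam ξ = (1/m) *
        (Λ1111 * (ξ 0)^4 + 4*Λ1112 * (ξ 0)^3 * (ξ 1) + 6*Λ1122 * (ξ 0)^2 * (ξ 1)^2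
          + 4*Λ2212 * (ξ 0) * (ξ 1)^3 + Λ2222 * (ξ 1)^4) * (ω ‖ξ‖ / ‖ξ‖^6)) :
    (1/2) * (∫ ξ in Metric.ball (0 : EuclideanSpace ℝ (Fin 2)) δ,
        lam ξ * (ξ 0)^4) = C1111 ∧
    (1/2) * (∫ ξ in Metric.ball (0 : EuclideanSpace ℝ (Fin 2)) δ,
        lam ξ * (ξ 0)^3 * (ξ 1)) = C1112 ∧
    (1/2) * (∫ ξ in Metric.ball (0 : EuclideanSpace ℝ (Fin 2)) δ,
        lam ξ * (ξ 0)^2 * (ξ 1)^2) = C1122 ∧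
    (1/2) * (∫ ξ in Metric.ball (0 : EuclideanSpace ℝ (Fin 2)) δ,
        lam ξ * (ξ 0) * (ξ 1)^3) = C2212 ∧
    (1/2) * (∫ ξ in Metric.ball (0 : EuclideanSpace ℝ (Fin 2)) δ,
        lam ξ * (ξ 1)^4) = C2222 := by
  have hmR : m = (∫ r in Ioo 0 δ, ω r * r ^ 3) * (2 * π) :=
    hm.trans (integral_ball_mul_norm_pow δ ω 2)
  set R := ∫ r in Ioo 0 δ, ω r * r ^ 3
  have hR : R ≠ 0 := fun h => hmpos.ne' (by rw [hmR, h, zero_mul])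
  have key : ∀ a b, a + b = 4 → ∫ ξ in Metric.ball (0 : ℝ²) δ, lam ξ * (ξ 0 ^ a * ξ 1 ^ b)
      = 1 / m * (Λ1111 * (R * circleMoment (a + 4) b)
        + 4 * Λ1112 * (R * circleMoment (a + 3) (b + 1))
        + 6 * Λ1122 * (R * circleMoment (a + 2) (b + 2))
        + 4 * Λ2212 * (R * circleMoment (a + 1) (b + 3))
        + Λ2222 * (R * circleMoment a (b + 4))) := by
    intro a b hab
    have hmoment := fun i j (hij : i + j = 6 + 2) => integral_ball_div_pow_mul_monomial δ ω hij
    rw [← hmoment _ _ (by omega), ← hmoment _ _ (by omega), ← hmoment _ _ (by omega),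
      ← hmoment _ _ (by omega), ← hmoment _ _ (by omega),
      ← integral_quartic_mul_monomial (fun ξ => ω ‖ξ‖ / ‖ξ‖ ^ 6) _ _ _ _ _ _ a b
        fun i j hij => integrableOn_div_pow_mul_monomial (k := 6) (by omega) hmint]
    refine integral_congr_ae ?_
    filter_upwards [Measure.ae_ne _ 0] with ξ hξ
    rw [hlam ξ hξ]
  have h40 := key 4 0 rfl
  have h31 := key 3 1 rfl
  have h22 := key 2 2 rfl
  have h13 := key 1 3 rfl
  have h04 := key 0 4 rfl
  simp only [pow_zero, pow_one, mul_one, one_mul, ← mul_assoc] at h40 h31 h22 h13 h04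
  rw [h40, h31, h22, h13, h04, hmR, hΛ1111, hΛ1112, hΛ1122, hΛ2212, hΛ2222]
  norm_num [circleMoment_add_two, circleMoment_add_two_zero, circleMoment_zero_zero,
    circleMoment_of_odd, Nat.odd_iff]
  refine ⟨?_, ?_, ?_, ?_, ?_⟩ <;> field_simp <;> ring

/-- the two-dimensional anisotropic bond-based micromodulus with
peridynamic tensor components `Λ` defined from the elasticity constants `C` by
the stated linear relations reproduces the elasticity constants via the matching
condition `C_{ijkl} = (1/2) ∫_{B_δ(0)} λ(ξ) ξ_i ξ_j ξ_k ξ_l dξ`. -/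
theorem statement12 (δ : ℝ) (hδ : 0 < δ)
    (ω : ℝ → ℝ) (hω : Measurable ω) (hωnn : ∀ r ∈ Set.Ioo (0:ℝ) δ, 0 ≤ ω r)
    (m : ℝ)
    (hm : m = ∫ ξ in Metric.ball (0 : EuclideanSpace ℝ (Fin 2)) δ, ω ‖ξ‖ * ‖ξ‖^2)
    (hmint : IntegrableOn (fun ξ : EuclideanSpace ℝ (Fin 2) => ω ‖ξ‖ * ‖ξ‖^2)
      (Metric.ball (0 : EuclideanSpace ℝ (Fin 2)) δ))
    (hmpos : 0 < m)
    (C1111 C1122 C1112 C2212 C2222 : ℝ)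
    (Λ1111 Λ1112 Λ1122 Λ2212 Λ2222 : ℝ)
    (hΛ1111 : Λ1111 = 10*C1111 - 20*C1122 + 2*C2222)
    (hΛ1112 : Λ1112 = 20*C1112 - 12*C2212)
    (hΛ1122 : Λ1122 = (-10*C1111 + 76*C1122 - 10*C2222)/3)
    (hΛ2212 : Λ2212 = -12*C1112 + 20*C2212)
    (hΛ2222 : Λ2222 = 2*C1111 - 20*C1122 + 10*C2222)
    (lam : EuclideanSpace ℝ (Fin 2) → ℝ)
    (hlam : ∀ ξ : EuclideanSpace ℝ (Fin 2), ξ ≠ 0 →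
      lam ξ = (1/m) *
        (Λ1111 * (ξ 0)^4 + 4*Λ1112 * (ξ 0)^3 * (ξ 1) + 6*Λ1122 * (ξ 0)^2 * (ξ 1)^2
          + 4*Λ2212 * (ξ 0) * (ξ 1)^3 + Λ2222 * (ξ 1)^4) * (ω ‖ξ‖ / ‖ξ‖^6)) :
    (1/2) * (∫ ξ in Metric.ball (0 : EuclideanSpace ℝ (Fin 2)) δ,
        lam ξ * (ξ 0)^4) = C1111 ∧
    (1/2) * (∫ ξ in Metric.ball (0 : EuclideanSpace ℝ (Fin 2)) δ,
        lam ξ * (ξ 0)^3 * (ξ 1)) = C1112 ∧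
    (1/2) * (∫ ξ in Metric.ball (0 : EuclideanSpace ℝ (Fin 2)) δ,
        lam ξ * (ξ 0)^2 * (ξ 1)^2) = C1122 ∧
    (1/2) * (∫ ξ in Metric.ball (0 : EuclideanSpace ℝ (Fin 2)) δ,
        lam ξ * (ξ 0) * (ξ 1)^3) = C2212 ∧
    (1/2) * (∫ ξ in Metric.ball (0 : EuclideanSpace ℝ (Fin 2)) δ,
        lam ξ * (ξ 1)^4) = C2222 :=
  statement12_general δ ω m hm hmint hmpos C1111 C1122 C1112 C2212 C2222 Λ1111 Λ1112 Λ1122 Λ2212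
    Λ2222 hΛ1111 hΛ1112 hΛ1122 hΛ2212 hΛ2222 lam hlam
end

section
/- Let δ > 0 and let ω : (0,δ) → ℝ be measurable with weighted volume m := ∫_{B_δ(0)⊂ℝ²} ω(‖ξ‖) ‖ξ‖² dξ ≠ 0. Given real constants C₁₁₁₁, C₁₁₂₂, C₁₁₁₂, C₂₂₁₂, C₂₂₂₂, define Λ₁₁₁₁ = 10C₁₁₁₁ − 20C₁₁₂₂ + 2C₂₂₂₂, Λ₁₁₁₂ = 20C₁₁₁₂ − 12C₂₂₁₂, Λ₁₁₂₂ = (−10C₁₁₁₁ + 76C₁₁₂₂ − 10C₂₂₂₂)/3, Λ₂₂₁₂ = −12C₁₁₁₂ + 20C₂₂₁₂, Λ₂₂₂₂ = 2C₁₁₁₁ − 20C₁₁₂₂ + 10C₂₂₂₂, and define λ(ξ) := (1/m)(Λ₁₁₁₁ ξ₁⁴ + 4Λ₁₁₁₂ ξ₁³ξ₂ + 6Λ₁₁₂₂ ξ₁²ξ₂² + 4Λ₂₂₁₂ ξ₁ξ₂³ + Λ₂₂₂₂ ξ₂⁴) ω(‖ξ‖)/‖ξ‖⁶ for ξ ≠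 0. Then: (i) λ(−ξ) = λ(ξ) for all ξ; (ii) if C₁₁₁₂ = C₂₂₁₂ = 0, then λ(Ref(0)ξ) = λ(ξ) for all ξ (rectangular symmetry); (iii) if moreover C₁₁₁₁ = C₂₂₂₂, then also λ(Ref(π/4)ξ) = λ(ξ) for all ξ (square symmetry); (iv) if moreover C₁₁₂₂ = C₁₁₁₁/3, then λ(ξ) = (Λ₁₁₁₁/m) ω(‖ξ‖)/‖ξ‖² with Λ₁₁₁₁ = (16/3)C₁₁₁₁, and λ(Qξ) = λ(ξ) for every orthogonal 2×2 matrix Q (isotropic symmetry). -/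
open MeasureTheory Real Matrix

theorem apply_map_eq_of_factorization {E : Type*} [NormedAddCommGroup E] {lam P : E → ℝ}
    {g : ℝ → ℝ} (hlam : ∀ ξ, ξ ≠ 0 → lam ξ = P ξ * g ‖ξ‖) {f : E → E} (hf : ∀ ξ, ‖f ξ‖ = ‖ξ‖)
    (hP : ∀ ξ, P (f ξ) = P ξ) (ξ : E) : lam (f ξ) = lam ξ := by
  rcases eq_or_ne ξ 0 with rfl | hξ
  · rw [norm_eq_zero.mp ((hf 0).trans norm_zero)]
  · have hfξ : f ξ ≠ 0 := by rwa [← norm_ne_zero_iff, hf, norm_ne_zero_iff]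
    rw [hlam _ hξ, hlam _ hfξ, hf, hP]

theorem norm_toLp_mulVec_of_mem_orthogonalGroup {n : Type*} [Fintype n] [DecidableEq n]
    {Q : Matrix n n ℝ} (hQ : Q ∈ orthogonalGroup n ℝ) (v : EuclideanSpace ℝ n) :
    ‖WithLp.toLp 2 (Q *ᵥ v.ofLp)‖ = ‖v‖ := by
  rw [← sq_eq_sq₀ (norm_nonneg _) (norm_nonneg _), ← real_inner_self_eq_norm_sq,
    ← real_inner_self_eq_norm_sq]
  simp only [EuclideanSpace.inner_eq_star_dotProduct, star_trivial]
  rw [dotProduct_mulVec, ← vecMul_transpose, vecMul_vecMul,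
    (mem_orthogonalGroup_iff' n ℝ).mp hQ, vecMul_one]

theorem Ref_mem_orthogonalGroup (θ : ℝ) : Ref θ ∈ orthogonalGroup (Fin 2) ℝ := by
  rw [mem_orthogonalGroup_iff']
  ext i j
  fin_cases i <;> fin_cases j <;> simp [Ref, mul_apply, Fin.sum_univ_two, ← sq, mul_comm]

theorem Ref_zero_mulVec (v : Fin 2 → ℝ) : Ref 0 *ᵥ v = ![v 0, -v 1] := by
  simp [Ref, vecHead, vecTail]

theorem Ref_pi_div_four_mulVec (v : Fin 2 → ℝ) : Ref (π / 4) *ᵥ v = ![v 1, v 0] := by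
  simp [Ref, vecHead, vecTail, show 2 * (π / 4) = π / 2 by ring]

/-- `Λ_{ijkl} x_i x_j x_k x_l` for a fully symmetric 2D tensor `Λ` with independent components
`Λ₁₁₁₁ = a`, `Λ₁₁₁₂ = b`, `Λ₁₁₂₂ = c`, `Λ₁₂₂₂ = d`, `Λ₂₂₂₂ = e`. -/
def binaryQuartic (a b c d e x y : ℝ) : ℝ :=
  a * x^4 + 4*b * x^3 * y + 6*c * x^2 * y^2 + 4*d * x * y^3 + e * y^4

section binaryQuartic

variable (a b c d e x y : ℝ)

theorem binaryQuartic_neg_neg :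
    binaryQuartic a b c d e (-x) (-y) = binaryQuartic a b c d e x y := by
  unfold binaryQuartic; ring

theorem binaryQuartic_neg_right :
    binaryQuartic a b c d e x (-y) = binaryQuartic a (-b) c (-d) e x y := by
  unfold binaryQuartic; ring

theorem binaryQuartic_swap : binaryQuartic a b c d e y x = binaryQuartic e d c b a x y := by
  unfold binaryQuartic; ring

theorem binaryQuartic_isotropic : binaryQuartic a 0 (a / 3) 0 a x y = a * (x^2 + y^2)^2 := by
  unfold binaryQuartic; ring

end binaryQuartic

theorem EuclideanSpace.sq_add_sq_eq_norm_sq (ξ : EuclideanSpace ℝ (Fin 2)) :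
    ξ 0 ^ 2 + ξ 1 ^ 2 = ‖ξ‖ ^ 2 := by
  simp [EuclideanSpace.real_norm_sq_eq, Fin.sum_univ_two]

theorem statement13_general
    (ω : ℝ → ℝ)
    (m : ℝ)
    (C1111 C1122 C1112 C2212 C2222 : ℝ)
    (Λ1111 Λ1112 Λ1122 Λ2212 Λ2222 : ℝ)
    (hΛ1111 : Λ1111 = 10*C1111 - 20*C1122 + 2*C2222)
    (hΛ1112 : Λ1112 = 20*C1112 - 12*C2212)
    (hΛ1122 : Λ1122 = (-10*C1111 + 76*C1122 - 10*C2222)/3)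
    (hΛ2212 : Λ2212 = -12*C1112 + 20*C2212)
    (hΛ2222 : Λ2222 = 2*C1111 - 20*C1122 + 10*C2222)
    (lam : EuclideanSpace ℝ (Fin 2) → ℝ)
    (hlam : ∀ ξ : EuclideanSpace ℝ (Fin 2), ξ ≠ 0 →
      lam ξ = (1/m) *
        (Λ1111 * (ξ 0)^4 + 4*Λ1112 * (ξ 0)^3 * (ξ 1) + 6*Λ1122 * (ξ 0)^2 * (ξ 1)^2
          + 4*Λ2212 * (ξ 0) * (ξ 1)^3 + Λ2222 * (ξ 1)^4) * (ω ‖ξ‖ / ‖ξ‖^6)) :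
    -- (i) evenness (oblique symmetry)
    (∀ ξ : EuclideanSpace ℝ (Fin 2), lam (-ξ) = lam ξ) ∧
    -- (ii) rectangular symmetry
    (C1112 = 0 → C2212 = 0 →
      ∀ ξ : EuclideanSpace ℝ (Fin 2), lam (WithLp.toLp 2 ((Ref 0).mulVec ξ)) = lam ξ) ∧
    -- (iii) square symmetry
    (C1112 = 0 → C2212 = 0 → C1111 = C2222 →
      ∀ ξ : EuclideanSpace ℝ (Fin 2), lam (WithLp.toLp 2 ((Ref (π/4)).mulVec ξ)) = lam ξ) ∧
    -- (iv) isotropic symmetry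
    (C1112 = 0 → C2212 = 0 → C1111 = C2222 → C1122 = C1111/3 →
      Λ1111 = (16/3) * C1111 ∧
      (∀ ξ : EuclideanSpace ℝ (Fin 2), ξ ≠ 0 →
        lam ξ = (Λ1111/m) * (ω ‖ξ‖ / ‖ξ‖^2)) ∧
      (∀ Q : Matrix (Fin 2) (Fin 2) ℝ, Q ∈ Matrix.orthogonalGroup (Fin 2) ℝ →
        ∀ ξ : EuclideanSpace ℝ (Fin 2), lam (WithLp.toLp 2 (Q.mulVec ξ)) = lam ξ)) := by
  set q : EuclideanSpace ℝ (Fin 2) → ℝ :=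
    fun ξ => binaryQuartic Λ1111 Λ1112 Λ1122 Λ2212 Λ2222 (ξ 0) (ξ 1) with hq
  have hlam_q : ∀ ξ, ξ ≠ 0 → lam ξ = 1 / m * q ξ * (ω ‖ξ‖ / ‖ξ‖ ^ 6) := hlam
  have invariant (f : EuclideanSpace ℝ (Fin 2) → EuclideanSpace ℝ (Fin 2))
      (hf : ∀ ξ, ‖f ξ‖ = ‖ξ‖) (hqf : ∀ ξ, q (f ξ) = q ξ) (ξ) : lam (f ξ) = lam ξ :=
    apply_map_eq_of_factorization (g := fun r => ω r / r ^ 6) hlam_q hf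
      (fun ξ => by rw [hqf]) ξ
  have hodd (h1 : C1112 = 0) (h2 : C2212 = 0) : Λ1112 = 0 ∧ Λ2212 = 0 := by
    constructor <;> linarith
  refine ⟨invariant _ norm_neg fun ξ => binaryQuartic_neg_neg .., fun h1 h2 => ?_,
    fun h1 h2 h3 => ?_, fun h1 h2 h3 h4 => ?_⟩
  · obtain ⟨hb, hd⟩ := hodd h1 h2
    refine invariant _ (norm_toLp_mulVec_of_mem_orthogonalGroup (Ref_mem_orthogonalGroup 0))
      fun ξ => ?_
    simp only [hq, Ref_zero_mulVec, cons_val_zero, cons_val_one,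
      binaryQuartic_neg_right, hb, hd, neg_zero]
  · obtain ⟨hb, hd⟩ := hodd h1 h2
    have he : Λ2222 = Λ1111 := by linarith
    refine invariant _
      (norm_toLp_mulVec_of_mem_orthogonalGroup (Ref_mem_orthogonalGroup (π / 4))) fun ξ => ?_
    simp only [hq, Ref_pi_div_four_mulVec, cons_val_zero, cons_val_one,
      binaryQuartic_swap, hb, hd, he]
  · obtain ⟨hb, hd⟩ := hodd h1 h2
    have he : Λ2222 = Λ1111 := by linarith
    have hc : Λ1122 = Λ1111 / 3 := by linarith
    have hq_norm (ξ : EuclideanSpace ℝ (Fin 2)) : q ξ = Λ1111 * (‖ξ‖ ^ 2) ^ 2 := by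
      simp only [hq, hb, hd, he, hc, binaryQuartic_isotropic,
        EuclideanSpace.sq_add_sq_eq_norm_sq]
    refine ⟨by linarith, fun ξ hξ => ?_, fun Q hQ => invariant _
      (norm_toLp_mulVec_of_mem_orthogonalGroup hQ) fun ξ => ?_⟩
    · rw [hlam_q ξ hξ, hq_norm]
      field_simp [norm_ne_zero_iff.mpr hξ]
    · rw [hq_norm, hq_norm, norm_toLp_mulVec_of_mem_orthogonalGroup hQ]

/-- the two-dimensional anisotropic bond-based micromodulus
function inherits the symmetries of the elasticity tensor that informs it. -/
theorem statement13 (δ : ℝ) (hδ : 0 < δ)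
    (ω : ℝ → ℝ) (hω : Measurable ω)
    (m : ℝ)
    (hm : m = ∫ ξ in Metric.ball (0 : EuclideanSpace ℝ (Fin 2)) δ, ω ‖ξ‖ * ‖ξ‖^2)
    (hmne : m ≠ 0)
    (C1111 C1122 C1112 C2212 C2222 : ℝ)
    (Λ1111 Λ1112 Λ1122 Λ2212 Λ2222 : ℝ)
    (hΛ1111 : Λ1111 = 10*C1111 - 20*C1122 + 2*C2222)
    (hΛ1112 : Λ1112 = 20*C1112 - 12*C2212)
    (hΛ1122 : Λ1122 = (-10*C1111 + 76*C1122 - 10*C2222)/3)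
    (hΛ2212 : Λ2212 = -12*C1112 + 20*C2212)
    (hΛ2222 : Λ2222 = 2*C1111 - 20*C1122 + 10*C2222)
    (lam : EuclideanSpace ℝ (Fin 2) → ℝ)
    (hlam : ∀ ξ : EuclideanSpace ℝ (Fin 2), ξ ≠ 0 →
      lam ξ = (1/m) *
        (Λ1111 * (ξ 0)^4 + 4*Λ1112 * (ξ 0)^3 * (ξ 1) + 6*Λ1122 * (ξ 0)^2 * (ξ 1)^2
          + 4*Λ2212 * (ξ 0) * (ξ 1)^3 + Λ2222 * (ξ 1)^4) * (ω ‖ξ‖ / ‖ξ‖^6)) :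
    -- (i) evenness (oblique symmetry)
    (∀ ξ : EuclideanSpace ℝ (Fin 2), lam (-ξ) = lam ξ) ∧
    -- (ii) rectangular symmetry
    (C1112 = 0 → C2212 = 0 →
      ∀ ξ : EuclideanSpace ℝ (Fin 2), lam (WithLp.toLp 2 ((Ref 0).mulVec ξ)) = lam ξ) ∧
    -- (iii) square symmetry
    (C1112 = 0 → C2212 = 0 → C1111 = C2222 →
      ∀ ξ : EuclideanSpace ℝ (Fin 2), lam (WithLp.toLp 2 ((Ref (π/4)).mulVec ξ)) = lam ξ) ∧
    -- (iv) isotropic symmetry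
    (C1112 = 0 → C2212 = 0 → C1111 = C2222 → C1122 = C1111/3 →
      Λ1111 = (16/3) * C1111 ∧
      (∀ ξ : EuclideanSpace ℝ (Fin 2), ξ ≠ 0 →
        lam ξ = (Λ1111/m) * (ω ‖ξ‖ / ‖ξ‖^2)) ∧
      (∀ Q : Matrix (Fin 2) (Fin 2) ℝ, Q ∈ Matrix.orthogonalGroup (Fin 2) ℝ →
        ∀ ξ : EuclideanSpace ℝ (Fin 2), lam (WithLp.toLp 2 (Q.mulVec ξ)) = lam ξ)) :=
  statement13_general ω m C1111 C1122 C1112 C2212 C2222 Λ1111 Λ1112 Λ1122 Λ2212 Λ2222 hΛ1111 hΛ1112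
    hΛ1122 hΛ2212 hΛ2222 lam hlam
end

section
/- Let h > 0 and δ ≥ 2h. Let λ : ℝ² × ℝ × ℝ → ℝ, written λ(ξ₁,ξ₂,z′,z), be bounded and measurable with the symmetries λ(ξ₁,ξ₂,z′,z) = λ(ξ₁,ξ₂,−z′,−z) = λ(ξ₁,ξ₂,z,z′) for all arguments, and with λ(ξ₁,ξ₂,z′,z) = 0 whenever |z| > h, or |z′| > h, or ξ₁² + ξ₂² + (z′−z)² ≥ δ². Let ρ : ℝ² → ℝ and let b : ℝ³ × ℝ → ℝ³ satisfy b₃ ≡ 0 and b(x,y,−z,t) = b(x,y,z,t). Suppose u : ℝ³ × ℝ → ℝ³ is bounded, continuous, twice differentiable in t, and satisfies the bond-based linear peridynamic equation of motion ρ(x,y) ∂ₜ²u_i(x,y,z,t) = ∫_{ℝ³} λ(x′−x, y′−y, z′, z) (x′_i − x_i) Σ_j (x′_j − x_j)(u_j(x′,y′,z′,t) − u_j(x,y,z,t)) dx′dy′dz′ + b_i(x,y,z,t) for all i ∈ {1,2,3} and all (x,y,z,t) (where (x₁,x₂,x₃) = (x,y,z)). Then the mirrored field v defined by v₁(x,y,z,t)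 = u₁(x,y,−z,t), v₂(x,y,z,t) = u₂(x,y,−z,t), v₃(x,y,z,t) = −u₃(x,y,−z,t) also satisfies the same equation of motion. -/
/-!
Reflecting through `z = 0` is the orthogonal map `R = diag(1, 1, -1)`, and the mirrored field is
`v(x) = R u(R x)`. Substituting `z′ ↦ -z′` in the force integral of `v` turns each bond vector
`ξ` into `R ξ` and, by `λ(ξ₁, ξ₂, -z′, z) = λ(ξ₁, ξ₂, z′, -z)`, the micromodulus at `x` into the one
at `R x`. Since `R² = 1` the bond sum `∑ⱼ ξⱼ (vⱼ(x′) - vⱼ(x))` is unchanged, so the `i`-th force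
component of `v` at `x` is `Rᵢᵢ` times that of `u` at `R x`; the same holds for the acceleration,
and the symmetry of `b` (with `b₃ = 0`) means `b(x) = R b(R x)`.
-/

open MeasureTheory

/-- The bond-based linear peridynamic equation of motion for a thin plate with a
position-aware micromodulus `λ(ξ₁, ξ₂, z′, z)`, mass density `ρ(x,y)` and body
force density `b`. -/
noncomputable def PeriEOM (lam : ℝ → ℝ → ℝ → ℝ → ℝ) (ρ : ℝ → ℝ → ℝ)
    (b : ℝ → ℝ → ℝ → ℝ → Fin 3 → ℝ) (u : ℝ → ℝ → ℝ → ℝ → Fin 3 → ℝ) : Prop :=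
  ∀ (x y z t : ℝ) (i : Fin 3),
    ρ x y * deriv (fun s => deriv (fun s' => u x y z s' i) s) t =
      (∫ p : ℝ × ℝ × ℝ,
        lam (p.1 - x) (p.2.1 - y) p.2.2 z *
          (![p.1 - x, p.2.1 - y, p.2.2 - z] i) *
          (∑ j, (![p.1 - x, p.2.1 - y, p.2.2 - z] j) *
            (u p.1 p.2.1 p.2.2 t j - u x y z t j))) + b x y z t i

theorem integral_comp_prod_prod_neg {α β G E : Type*} [MeasureSpace α] [MeasureSpace β]
    [MeasureSpace G] [InvolutiveNeg G] [MeasurableNeg G] [NormedAddCommGroup E]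
    [NormedSpace ℝ E] [SFinite (volume : Measure α)] [SFinite (volume : Measure β)]
    [SFinite (volume : Measure G)] [(volume : Measure G).IsNegInvariant] (f : α × β × G → E) :
    ∫ p : α × β × G, f (p.1, p.2.1, -p.2.2) = ∫ p, f p :=
  ((MeasurePreserving.id volume).prod ((MeasurePreserving.id volume).prod
      (Measure.measurePreserving_neg volume))).integral_comp
    ((MeasurableEquiv.refl α).prodCongr ((MeasurableEquiv.refl β).prodCongr
      (MeasurableEquiv.neg G))).measurableEmbedding f

noncomputable def periForce (lam : ℝ → ℝ → ℝ → ℝ → ℝ) (u : ℝ → ℝ → ℝ → ℝ → Fin 3 → ℝ)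
    (x y z t : ℝ) (i : Fin 3) : ℝ :=
  ∫ p : ℝ × ℝ × ℝ,
    lam (p.1 - x) (p.2.1 - y) p.2.2 z *
      (![p.1 - x, p.2.1 - y, p.2.2 - z] i) *
      (∑ j, (![p.1 - x, p.2.1 - y, p.2.2 - z] j) *
        (u p.1 p.2.1 p.2.2 t j - u x y z t j))

def zSign : Fin 3 → ℝ := ![1, 1, -1]

theorem zSign_mul_self (i : Fin 3) : zSign i * zSign i = 1 := by
  fin_cases i <;> simp [zSign]

def zMirror (u : ℝ → ℝ → ℝ → ℝ → Fin 3 → ℝ) : ℝ → ℝ → ℝ → ℝ → Fin 3 → ℝ :=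
  fun x y z t i => zSign i * u x y (-z) t i

theorem zMirror_eq (u : ℝ → ℝ → ℝ → ℝ → Fin 3 → ℝ) :
    zMirror u = fun x y z t => ![u x y (-z) t 0, u x y (-z) t 1, -(u x y (-z) t 2)] := by
  ext x y z t i
  fin_cases i <;> simp [zMirror, zSign]

theorem periForce_zMirror {lam : ℝ → ℝ → ℝ → ℝ → ℝ}
    (hsym : ∀ ξ₁ ξ₂ z' z, lam ξ₁ ξ₂ z' z = lam ξ₁ ξ₂ (-z') (-z))
    (u : ℝ → ℝ → ℝ → ℝ → Fin 3 → ℝ) (x y z t : ℝ) (i : Fin 3) :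
    periForce lam (zMirror u) x y z t i = zSign i * periForce lam u x y (-z) t i := by
  rw [periForce, ← integral_comp_prod_prod_neg, periForce, ← integral_const_mul]
  congr 1
  funext p
  have hbond : ![p.1 - x, p.2.1 - y, -p.2.2 - z] =
      fun j => zSign j * ![p.1 - x, p.2.1 - y, p.2.2 - -z] j := by
    ext j; fin_cases j <;> simp [zSign]; ring
  simp only [zMirror, neg_neg, hbond, hsym _ _ (-p.2.2) z]
  simp only [← mul_sub, mul_mul_mul_comm (zSign _), zSign_mul_self, one_mul]
  ring

theorem deriv_deriv_zMirror (u : ℝ → ℝ → ℝ → ℝ → Fin 3 → ℝ) (x y z t : ℝ) (i : Fin 3) :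
    deriv (fun s => deriv (fun s' => zMirror u x y z s' i) s) t =
      zSign i * deriv (fun s => deriv (fun s' => u x y (-z) s' i) s) t := by
  simp only [zMirror, deriv_const_mul_field']

theorem zSign_mul_apply_neg {b : ℝ → ℝ → ℝ → ℝ → Fin 3 → ℝ} (hb3 : ∀ x y z t, b x y z t 2 = 0)
    (hbsym : ∀ x y z t, b x y (-z) t = b x y z t) (x y z t : ℝ) (i : Fin 3) :
    zSign i * b x y (-z) t i = b x y z t i := by
  rw [hbsym]
  fin_cases i <;> simp [zSign, hb3]

theorem statement15_general
    (lam : ℝ → ℝ → ℝ → ℝ → ℝ)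
    (hsym1 : ∀ ξ₁ ξ₂ z' z, lam ξ₁ ξ₂ z' z = lam ξ₁ ξ₂ (-z') (-z))
    (ρ : ℝ → ℝ → ℝ)
    (b : ℝ → ℝ → ℝ → ℝ → Fin 3 → ℝ)
    (hb3 : ∀ x y z t, b x y z t 2 = 0)
    (hbsym : ∀ x y z t, b x y (-z) t = b x y z t)
    (u : ℝ → ℝ → ℝ → ℝ → Fin 3 → ℝ)
    (hEOM : PeriEOM lam ρ b u) :
    PeriEOM lam ρ b
      (fun x y z t => ![u x y (-z) t 0, u x y (-z) t 1, -(u x y (-z) t 2)]) := by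
  rw [← zMirror_eq]
  intro x y z t i
  change _ = periForce lam (zMirror u) x y z t i + _
  rw [deriv_deriv_zMirror, periForce_zMirror hsym1, ← zSign_mul_apply_neg hb3 hbsym, mul_left_comm,
    hEOM x y (-z) t i, periForce, mul_add]

/-- for a thin plate with monoclinic symmetry relative to the
plane `z = 0`, mirroring a solution of the bond-based linear peridynamic
equation of motion through `z = 0` (flipping the third displacement component)
again yields a solution. -/
theorem statement15 (h δ : ℝ) (hh : 0 < h) (hδ : 2*h ≤ δ)
    (lam : ℝ → ℝ → ℝ → ℝ → ℝ)
    (hbdd : ∃ M, ∀ ξ₁ ξ₂ z' z, |lam ξ₁ ξ₂ z' z| ≤ M)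
    (hmeas : Measurable fun p : ℝ × ℝ × ℝ × ℝ => lam p.1 p.2.1 p.2.2.1 p.2.2.2)
    (hsym1 : ∀ ξ₁ ξ₂ z' z, lam ξ₁ ξ₂ z' z = lam ξ₁ ξ₂ (-z') (-z))
    (hsym2 : ∀ ξ₁ ξ₂ z' z, lam ξ₁ ξ₂ z' z = lam ξ₁ ξ₂ z z')
    (hvanish : ∀ ξ₁ ξ₂ z' z, (h < |z| ∨ h < |z'| ∨ δ^2 ≤ ξ₁^2 + ξ₂^2 + (z'-z)^2) →
      lam ξ₁ ξ₂ z' z = 0)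
    (ρ : ℝ → ℝ → ℝ)
    (b : ℝ → ℝ → ℝ → ℝ → Fin 3 → ℝ)
    (hb3 : ∀ x y z t, b x y z t 2 = 0)
    (hbsym : ∀ x y z t, b x y (-z) t = b x y z t)
    (u : ℝ → ℝ → ℝ → ℝ → Fin 3 → ℝ)
    (hubdd : ∃ M, ∀ x y z t i, |u x y z t i| ≤ M)
    (hucont : Continuous fun p : ℝ × ℝ × ℝ × ℝ =>
      (fun i => u p.1 p.2.1 p.2.2.1 p.2.2.2 i : Fin 3 → ℝ))
    (hut : ∀ x y z t i, DifferentiableAt ℝ (fun s => u x y z s i) t ∧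
      DifferentiableAt ℝ (deriv fun s => u x y z s i) t)
    (hEOM : PeriEOM lam ρ b u) :
    PeriEOM lam ρ b
      (fun x y z t => ![u x y (-z) t 0, u x y (-z) t 1, -(u x y (-z) t 2)]) :=
  statement15_general lam hsym1 ρ b hb3 hbsym u hEOM
end

section
/- Let δ > 0, C₁₁₁₁ ∈ ℝ, and set m := ∫_{B_δ(0)⊂ℝ³} ‖ξ‖² dξ = (4/5)πδ⁵. Define the isotropic three-dimensional micromodulus λ(ξ) := (10 C₁₁₁₁ / m) · (1/‖ξ‖²) for 0 < ‖ξ‖ < δ (corresponding to influence function ω ≡ 1). Then for every (ξ₁,ξ₂) with 0 < r := √(ξ₁²+ξ₂²) < δ, the plane strain micromodulus functions λ_n(ξ₁,ξ₂) := ∫_{−√(δ²−r²)}^{√(δ²−r²)} λ(ξ₁,ξ₂,ξ₃) ξ₃ⁿ dξ₃ satisfy: λ₀(ξ₁,ξ₂) = (25 C₁₁₁₁ / (π δ⁵ r)) · arctan(√(δ²/r² − 1)); λ₁(ξ₁,ξ₂) = 0; and λ₂(ξ₁,ξ₂) = (25 C₁₁₁₁ / (π δ⁴)) · ( √(1 −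 r²/δ²) − (r/δ) · arctan(√(δ²/r² − 1)) ). -/
open MeasureTheory Real

/-!
In polar coordinates the weighted volume is `3 · vol(B₁) · ∫₀^δ ρ⁴ dρ`. Since `ξ₁² + ξ₂² = r²`,
the three kernels are integrals of `tⁿ / (r² + t²)` over `[-s, s]` with `s = √(δ² - r²)`:
an arctangent for `n = 0`, an odd integrand for `n = 1`, and for `n = 2` the splitting
`t² / (r² + t²) = 1 - r² / (r² + t²)` reduces to the case `n = 0`.
-/

open Metric Set in
theorem setIntegral_ball_norm_pow {E : Type*} [NormedAddCommGroup E] [NormedSpace ℝ E]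
    [Nontrivial E] [FiniteDimensional ℝ E] [MeasurableSpace E] [BorelSpace E]
    (μ : Measure E) [μ.IsAddHaarMeasure] (n : ℕ) {δ : ℝ} (hδ : 0 ≤ δ) :
    ∫ x in ball 0 δ, ‖x‖ ^ n ∂μ =
      Module.finrank ℝ E / (Module.finrank ℝ E + n) * μ.real (ball 0 1) *
        δ ^ (Module.finrank ℝ E + n) := by
  have hdim : Module.finrank ℝ E - 1 + n + 1 = Module.finrank ℝ E + n := by
    have : 0 < Module.finrank ℝ E := Module.finrank_pos
    omega
  have hball : (ball (0 : E) δ).indicator (‖·‖ ^ n) = fun x => (Iio δ).indicator (· ^ n) ‖x‖ :=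
    funext fun x => by by_cases h : ‖x‖ < δ <;> simp [h]
  have hradial : ∫ y in Ioi (0 : ℝ), y ^ (Module.finrank ℝ E - 1) • (Iio δ).indicator (· ^ n) y =
      δ ^ (Module.finrank ℝ E + n) / (Module.finrank ℝ E + n) := by
    simp_rw [← indicator_smul_apply (Iio δ) (· ^ (Module.finrank ℝ E - 1)), smul_eq_mul, ← pow_add]
    rw [setIntegral_indicator measurableSet_Iio, Ioi_inter_Iio, ← integral_Ioc_eq_integral_Ioo,
      ← intervalIntegral.integral_of_le hδ, integral_pow, hdim, ← Nat.cast_add_one, hdim,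
      zero_pow (by omega), sub_zero, Nat.cast_add]
  rw [← integral_indicator measurableSet_ball, hball, integral_fun_norm_addHaar μ, hradial,
    nsmul_eq_mul, smul_eq_mul]
  ring

theorem integral_norm_sq_ball_fin_three {δ : ℝ} (hδ : 0 ≤ δ) :
    ∫ ξ in Metric.ball (0 : EuclideanSpace ℝ (Fin 3)) δ, ‖ξ‖ ^ 2 = 4 / 5 * π * δ ^ 5 := by
  rw [setIntegral_ball_norm_pow volume 2 hδ, finrank_euclideanSpace_fin, measureReal_def,
    EuclideanSpace.volume_ball_fin_three, ENNReal.toReal_mul, ENNReal.toReal_pow,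
    ENNReal.toReal_ofReal zero_le_one, ENNReal.toReal_ofReal (by positivity)]
  ring

namespace intervalIntegral

theorem integral_neg_self_eq_zero_of_odd {E : Type*} [NormedAddCommGroup E] [NormedSpace ℝ E]
    {f : ℝ → E} (hf : ∀ x, f (-x) = -f x) (a : ℝ) : ∫ x in -a..a, f x = 0 := by
  have h := integral_comp_neg (a := -a) (b := a) f
  simp only [hf, integral_neg, neg_neg] at h
  have h2 : (2 : ℝ) • ∫ x in -a..a, f x = 0 := by
    rw [two_smul]
    nth_rewrite 1 [← h]
    exact neg_add_cancel _
  exact (smul_eq_zero.mp h2).resolve_left two_ne_zero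

theorem integral_sq_div_sq_add_sq {a b c : ℝ} (hc : c ≠ 0) :
    ∫ x in a..b, x ^ 2 / (c ^ 2 + x ^ 2) = b - a - c * (arctan (b / c) - arctan (a / c)) := by
  have hpos : ∀ x : ℝ, c ^ 2 + x ^ 2 ≠ 0 := fun x => by positivity
  have hsplit : ∀ x : ℝ, x ^ 2 / (c ^ 2 + x ^ 2) = 1 - c ^ 2 * (c ^ 2 + x ^ 2)⁻¹ := fun x => by
    field_simp [hpos x]; ring
  simp_rw [hsplit]
  rw [integral_sub intervalIntegrable_const
      ((by fun_prop (disch := exact hpos _) :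
        Continuous fun x : ℝ => c ^ 2 * (c ^ 2 + x ^ 2)⁻¹).intervalIntegrable _ _),
    integral_const_mul, integral_inv_sq_add_sq hc, integral_const, smul_eq_mul, mul_one]
  field_simp

end intervalIntegral

open intervalIntegral in
theorem statement19_general (δ : ℝ) (hδ : 0 < δ) (C1111 : ℝ) (ξ₁ ξ₂ : ℝ)
    (r : ℝ) (hr : r = Real.sqrt (ξ₁^2 + ξ₂^2)) (hr0 : 0 < r) :
    -- the weighted volume
    (∫ ξ in Metric.ball (0 : EuclideanSpace ℝ (Fin 3)) δ, ‖ξ‖^2)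
        = (4/5) * π * δ^5 ∧
    -- λ₀
    (∫ t in (-(Real.sqrt (δ^2 - r^2)))..(Real.sqrt (δ^2 - r^2)),
        (10 * C1111 / ((4/5) * π * δ^5)) * (1 / (ξ₁^2 + ξ₂^2 + t^2)))
      = (25 * C1111 / (π * δ^5 * r)) * Real.arctan (Real.sqrt (δ^2/r^2 - 1)) ∧
    -- λ₁
    (∫ t in (-(Real.sqrt (δ^2 - r^2)))..(Real.sqrt (δ^2 - r^2)),
        (10 * C1111 / ((4/5) * π * δ^5)) * (1 / (ξ₁^2 + ξ₂^2 + t^2)) * t)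
      = 0 ∧
    -- λ₂
    (∫ t in (-(Real.sqrt (δ^2 - r^2)))..(Real.sqrt (δ^2 - r^2)),
        (10 * C1111 / ((4/5) * π * δ^5)) * (1 / (ξ₁^2 + ξ₂^2 + t^2)) * t^2)
      = (25 * C1111 / (π * δ^4)) *
          (Real.sqrt (1 - r^2/δ^2) - (r/δ) * Real.arctan (Real.sqrt (δ^2/r^2 - 1))) := by
  have hξ : ξ₁ ^ 2 + ξ₂ ^ 2 = r ^ 2 := by rw [hr, sq_sqrt (by positivity)]
  set s := √(δ ^ 2 - r ^ 2)
  have hsr : √(δ ^ 2 / r ^ 2 - 1) = s / r := by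
    rw [← sqrt_sq hr0.le, ← sqrt_div' _ (sq_nonneg r), sqrt_sq hr0.le]
    congr 1
    field_simp
  have hsδ : √(1 - r ^ 2 / δ ^ 2) = s / δ := by
    rw [← sqrt_sq hδ.le, ← sqrt_div' _ (sq_nonneg δ), sqrt_sq hδ.le]
    congr 1
    field_simp
  simp_rw [hξ, hsr, hsδ, one_div]
  refine ⟨integral_norm_sq_ball_fin_three hδ.le, ?_, ?_, ?_⟩
  · rw [intervalIntegral.integral_const_mul, integral_inv_sq_add_sq hr0.ne', neg_div, arctan_neg]
    field_simp
    ring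
  · exact integral_neg_self_eq_zero_of_odd (fun t => by ring) s
  · simp_rw [mul_assoc, inv_mul_eq_div]
    rw [intervalIntegral.integral_const_mul, integral_sq_div_sq_add_sq hr0.ne', neg_div, arctan_neg]
    field_simp
    ring

/-- closed-form expressions for the peridynamic plane strain
micromodulus functions `λ_n(ξ₁,ξ₂) = ∫_{-√(δ²-r²)}^{√(δ²-r²)} λ(ξ) ξ₃ⁿ dξ₃`,
`n = 0,1,2`, of the isotropic three-dimensional micromodulus
`λ(ξ) = (10 C₁₁₁₁/m)/‖ξ‖²` with `m = ∫_{B_δ(0)} ‖ξ‖² dξ = (4/5)πδ⁵`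
(influence function `ω ≡ 1`). -/
theorem statement19 (δ : ℝ) (hδ : 0 < δ) (C1111 : ℝ) (ξ₁ ξ₂ : ℝ)
    (r : ℝ) (hr : r = Real.sqrt (ξ₁^2 + ξ₂^2)) (hr0 : 0 < r) (hrδ : r < δ) :
    -- the weighted volume
    (∫ ξ in Metric.ball (0 : EuclideanSpace ℝ (Fin 3)) δ, ‖ξ‖^2)
        = (4/5) * π * δ^5 ∧
    -- λ₀
    (∫ t in (-(Real.sqrt (δ^2 - r^2)))..(Real.sqrt (δ^2 - r^2)),
        (10 * C1111 / ((4/5) * π * δ^5)) * (1 / (ξ₁^2 + ξ₂^2 + t^2)))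
      = (25 * C1111 / (π * δ^5 * r)) * Real.arctan (Real.sqrt (δ^2/r^2 - 1)) ∧
    -- λ₁
    (∫ t in (-(Real.sqrt (δ^2 - r^2)))..(Real.sqrt (δ^2 - r^2)),
        (10 * C1111 / ((4/5) * π * δ^5)) * (1 / (ξ₁^2 + ξ₂^2 + t^2)) * t)
      = 0 ∧
    -- λ₂
    (∫ t in (-(Real.sqrt (δ^2 - r^2)))..(Real.sqrt (δ^2 - r^2)),
        (10 * C1111 / ((4/5) * π * δ^5)) * (1 / (ξ₁^2 + ξ₂^2 + t^2)) * t^2)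
      = (25 * C1111 / (π * δ^4)) *
          (Real.sqrt (1 - r^2/δ^2) - (r/δ) * Real.arctan (Real.sqrt (δ^2/r^2 - 1))) :=
  statement19_general δ hδ C1111 ξ₁ ξ₂ r hr hr0
end
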